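/- arXiv:1502.07639 — 7 statements merged into one kernel-verified Lean document; each statement's English description precedes it below -/
import Mathlib

section
/- For every legal queue behavior b there exists a canonical behavior b_c such that b and b_c are observationally equivalent. -/
inductive QAction : Type
  | enq : ℕ → QAction
  | deq : Option ℕ → QAction
  deriving DecidableEq

structure QEvent : Type where
  uid : ℕ
  act : QAction
  deriving DecidableEq

def QEvent.isEnq : QEvent → Bool
  | ⟨_, QAction.enq _⟩ => true
  | _ => false

def QEvent.isDeq : QEvent → Bool
  | ⟨_, QAction.deq _⟩ => true
  | _ => false

abbrev Behavior := List QEvent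

/-- One step of the queue LTS. -/
inductive QStep : List ℕ → QAction → List ℕ → Prop
  | enq (q : List ℕ) (x : ℕ) : QStep q (QAction.enq x) (q ++ [x])
  | deq (x : ℕ) (q : List ℕ) : QStep (x :: q) (QAction.deq (some x)) q
  | deqNull : QStep [] (QAction.deq none) []

/-- A behavior is the trace of a run of the queue LTS from the given state. -/
inductive LegalFrom : List ℕ → Behavior → Prop
  | nil (q : List ℕ) : LegalFrom q []
  | cons {q q' : List ℕ} {a : QAction} {rest : Behavior} (u : ℕ) :
      QStep q a q' → LegalFrom q' rest → LegalFrom q (⟨u, a⟩ :: rest)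

/-- A behavior is legal if it is the trace of a run of the queue LTS from ε. -/
def Legal (b : Behavior) : Prop := LegalFrom [] b

/-- `e` occurs strictly before `e'` in `b`. -/
def Precedes (b : Behavior) (e e' : QEvent) : Prop :=
  ∃ i j : ℕ, i < j ∧ b[i]? = some e ∧ b[j]? = some e'

/-- Observational equivalence: same subsequence of enqueue events and of dequeue events. -/
def ObsEquiv (b1 b2 : Behavior) : Prop :=
  b1.filter QEvent.isEnq = b2.filter QEvent.isEnq ∧
  b1.filter QEvent.isDeq = b2.filter QEvent.isDeq

/-- Sequences consisting only of enqueue events. -/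
inductive EnqStar : Behavior → Prop
  | nil : EnqStar []
  | cons (u x : ℕ) {rest : Behavior} : EnqStar rest → EnqStar (⟨u, QAction.enq x⟩ :: rest)

/-- Canonical behaviors: the language ((deq NULL)* · enq(x)·deq(x))* · (deq NULL)* · (enq(x))*. -/
inductive Canonical : Behavior → Prop
  | tail {rest : Behavior} : EnqStar rest → Canonical rest
  | deqNull (u : ℕ) {rest : Behavior} :
      Canonical rest → Canonical (⟨u, QAction.deq none⟩ :: rest)
  | pair (u v x : ℕ) {rest : Behavior} :
      Canonical rest → Canonical (⟨u, QAction.enq x⟩ :: ⟨v, QAction.deq (some x)⟩ :: rest)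


/-- Pending list of enqueue events whose values form the queue state. -/
inductive Matches : Behavior → List ℕ → Prop
  | nil : Matches [] []
  | cons (u x : ℕ) {p : Behavior} {q : List ℕ} :
      Matches p q → Matches (⟨u, QAction.enq x⟩ :: p) (x :: q)

lemma Matches.enqStar {p : Behavior} {q : List ℕ} (h : Matches p q) : EnqStar p := by
  induction h with
  | nil => exact EnqStar.nil
  | cons u x _ ih => exact EnqStar.cons u x ih

lemma Matches.append {p : Behavior} {q : List ℕ} (h : Matches p q) (u x : ℕ) :
    Matches (p ++ [⟨u, QAction.enq x⟩]) (q ++ [x]) := by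
  induction h with
  | nil => exact Matches.cons u x Matches.nil
  | cons u' x' _ ih => exact Matches.cons u' x' ih

lemma Matches.filterEnq {p : Behavior} {q : List ℕ} (h : Matches p q) :
    p.filter QEvent.isEnq = p := by
  induction h with
  | nil => rfl
  | cons u x _ ih => simp [List.filter, QEvent.isEnq, ih]

lemma Matches.filterDeq {p : Behavior} {q : List ℕ} (h : Matches p q) :
    p.filter QEvent.isDeq = [] := by
  induction h with
  | nil => rfl
  | cons u x _ ih => simp [List.filter, QEvent.isDeq, ih]

def canon : Behavior → Behavior → Behavior
  | pend, [] => pend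
  | pend, ⟨u, QAction.enq x⟩ :: rest => canon (pend ++ [⟨u, QAction.enq x⟩]) rest
  | pend, ⟨u, QAction.deq none⟩ :: rest => ⟨u, QAction.deq none⟩ :: canon pend rest
  | [], ⟨u, QAction.deq (some x)⟩ :: rest => ⟨u, QAction.deq (some x)⟩ :: canon [] rest
  | e :: pend, ⟨u, QAction.deq (some x)⟩ :: rest =>
      e :: ⟨u, QAction.deq (some x)⟩ :: canon pend rest
  termination_by _ b => b.length

lemma canon_main {q : List ℕ} {b : Behavior} (hleg : LegalFrom q b) :
    ∀ pend : Behavior, Matches pend q →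
      Canonical (canon pend b) ∧
      (canon pend b).filter QEvent.isEnq = pend ++ b.filter QEvent.isEnq ∧
      (canon pend b).filter QEvent.isDeq = b.filter QEvent.isDeq := by
  induction hleg with
  | nil q =>
      intro pend hm
      rw [canon]
      refine ⟨Canonical.tail hm.enqStar, ?_, ?_⟩ <;>
        simp [canon, hm.filterEnq, hm.filterDeq]
  | cons u hstep _ ih =>
      intro pend hm
      cases hstep with
      | enq q x =>
          obtain ⟨hc, he, hd⟩ := ih (pend ++ [⟨u, QAction.enq x⟩]) (hm.append u x)
          rw [canon]
          refine ⟨hc, ?_, ?_⟩ <;>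
            simp [canon, he, hd, List.filter, QEvent.isEnq, QEvent.isDeq]
      | deq x q' =>
          cases hm with
          | cons u' _ hm' =>
            obtain ⟨hc, he, hd⟩ := ih _ hm'
            rw [canon]
            refine ⟨Canonical.pair u' u x hc, ?_, ?_⟩ <;>
              simp [canon, he, hd, List.filter, QEvent.isEnq, QEvent.isDeq]
      | deqNull =>
          cases hm with
          | nil =>
            obtain ⟨hc, he, hd⟩ := ih [] Matches.nil
            rw [canon]
            refine ⟨Canonical.deqNull u hc, ?_, ?_⟩ <;>
              simp [canon, he, hd, List.filter, QEvent.isEnq, QEvent.isDeq]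

/-- For every legal queue behavior there is an observationally equivalent
canonical behavior. -/
theorem legal_has_canonical_obsEquiv (b : Behavior) (hnd : b.Nodup) (hleg : Legal b) :
    ∃ bc : Behavior, Canonical bc ∧ ObsEquiv b bc := by
  obtain ⟨hc, he, hd⟩ := canon_main hleg [] Matches.nil
  exact ⟨canon [] b, hc, he.symm, hd.symm⟩
end

section
/- Let b be a behavior with a sequential witness μ, let d be a dequeue event and e an enqueue event of b with μ(d)=e, and let b' be the behavior obtained by removing both d and e from b. Then the restriction of μ to the dequeue events of b' is a sequential witness for b'. -/
/-- `e` enqueues the same (non-NULL) value that `d` dequeues. -/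
def SameVal (e d : QEvent) : Prop :=
  ∃ x, e.act = QAction.enq x ∧ d.act = QAction.deq (some x)

/-- A sequential witness for a behavior `b`. -/
structure SeqWitness (b : Behavior) (μ : QEvent → Option QEvent) : Prop where
  codom : ∀ d ∈ b, d.isDeq = true → ∀ e, μ d = some e → e ∈ b ∧ e.isEnq = true
  val : ∀ d ∈ b, d.isDeq = true → ∀ e, μ d = some e → SameVal e d
  null : ∀ d ∈ b, d.isDeq = true → (μ d = none ↔ d.act = QAction.deq none)
  inj : ∀ d ∈ b, ∀ d' ∈ b, d.isDeq = true → d'.isDeq = true →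
        ∀ e, μ d = some e → μ d' = some e → d = d'
  order : ∀ d ∈ b, d.isDeq = true → ∀ e, μ d = some e → Precedes b e d
  fifo : ∀ e ∈ b, e.isEnq = true → ∀ d' ∈ b, d'.isDeq = true → ∀ e',
         μ d' = some e' → Precedes b e e' →
         ∃ d ∈ b, d.isDeq = true ∧ μ d = some e ∧ Precedes b d d'
  empty : ∀ d ∈ b, d.isDeq = true → μ d = none →
          {e : QEvent | e ∈ b ∧ e.isEnq = true ∧ Precedes b e d}.ncard =
          {d' : QEvent | d' ∈ b ∧ d'.isDeq = true ∧ Precedes b d' d ∧ μ d' ≠ none}.ncard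

/-!
Deleting `e` and its match `d` preserves the relative order of all other events, so every clause
except the one for NULL dequeues restricts directly. For a NULL dequeue `d'` the two counts must
drop together, i.e. `e ≺ d'` iff `d ≺ d'`. One direction is `e ≺ d`. For the other, `μ` maps the
matched dequeues before `d'` injectively into the enqueues before `d'`; the two sets have the same
size, so the map is onto and `e` is matched by a dequeue before `d'`.
-/

theorem QEvent.ne_of_isEnq_of_isDeq {x y : QEvent} (hx : x.isEnq = true) (hy : y.isDeq = true) :
    x ≠ y := by
  rintro rfl
  rcases x with ⟨_, _ | _⟩ <;> simp [QEvent.isEnq, QEvent.isDeq] at hx hy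

theorem List.Nodup.mem_erase_erase_iff {α : Type*} [BEq α] [LawfulBEq α] {l : List α}
    (hnd : l.Nodup) {a b x : α} : x ∈ (l.erase a).erase b ↔ x ∈ l ∧ x ≠ a ∧ x ≠ b := by
  rw [(hnd.erase a).mem_erase_iff, hnd.mem_erase_iff]
  tauto

namespace Precedes

variable {l l' : Behavior} {a b x y z : QEvent}

theorem left_mem (h : Precedes l x y) : x ∈ l := by
  obtain ⟨i, -, -, hx, -⟩ := h
  exact List.mem_of_getElem? hx

theorem right_mem (h : Precedes l x y) : y ∈ l := by
  obtain ⟨-, j, -, -, hy⟩ := h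
  exact List.mem_of_getElem? hy

theorem iff_idxOf_lt (hnd : l.Nodup) :
    Precedes l x y ↔ x ∈ l ∧ y ∈ l ∧ l.idxOf x < l.idxOf y := by
  constructor
  · rintro ⟨i, j, hij, hx, hy⟩
    obtain ⟨hi, rfl⟩ := List.getElem?_eq_some_iff.1 hx
    obtain ⟨hj, rfl⟩ := List.getElem?_eq_some_iff.1 hy
    rw [hnd.idxOf_getElem, hnd.idxOf_getElem]
    exact ⟨List.getElem_mem hi, List.getElem_mem hj, hij⟩
  · rintro ⟨hx, hy, hlt⟩
    exact ⟨_, _, hlt, List.getElem?_idxOf hx, List.getElem?_idxOf hy⟩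

theorem trans (hnd : l.Nodup) (h₁ : Precedes l x y) (h₂ : Precedes l y z) : Precedes l x z := by
  rw [iff_idxOf_lt hnd] at *
  exact ⟨h₁.1, h₂.2.1, h₁.2.2.trans h₂.2.2⟩

theorem of_sublist (hs : List.Sublist l' l) (h : Precedes l' x y) : Precedes l x y := by
  obtain ⟨f, hf⟩ := List.sublist_iff_exists_orderEmbedding_getElem?_eq.1 hs
  obtain ⟨i, j, hij, hx, hy⟩ := h
  exact ⟨f i, f j, f.lt_iff_lt.2 hij, hf i ▸ hx, hf j ▸ hy⟩

theorem to_sublist (hs : List.Sublist l' l) (hnd : l.Nodup) (hx : x ∈ l') (hy : y ∈ l')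
    (h : Precedes l x y) : Precedes l' x y := by
  obtain ⟨f, hf⟩ := List.sublist_iff_exists_orderEmbedding_getElem?_eq.1 hs
  have hidx : ∀ w ∈ l', l.idxOf w = f (l'.idxOf w) := fun w hw => by
    obtain ⟨hlt, hfw⟩ := List.getElem?_eq_some_iff.1 ((hf _).symm.trans (List.getElem?_idxOf hw))
    simpa only [hfw] using hnd.idxOf_getElem _ hlt
  rw [iff_idxOf_lt hnd] at h
  rw [iff_idxOf_lt (hs.nodup hnd), ← f.lt_iff_lt, ← hidx x hx, ← hidx y hy]
  exact ⟨hx, hy, h.2.2⟩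

theorem erase_iff (hnd : l.Nodup) (hy : y ≠ a) :
    Precedes (l.erase a) x y ↔ Precedes l x y ∧ x ≠ a := by
  refine ⟨fun h => ⟨h.of_sublist l.erase_sublist, (hnd.mem_erase_iff.1 h.left_mem).1⟩, ?_⟩
  rintro ⟨h, hx⟩
  exact h.to_sublist l.erase_sublist hnd (hnd.mem_erase_iff.2 ⟨hx, h.left_mem⟩)
    (hnd.mem_erase_iff.2 ⟨hy, h.right_mem⟩)

theorem erase_erase_iff (hnd : l.Nodup) (hya : y ≠ a) (hyb : y ≠ b) :
    Precedes ((l.erase a).erase b) x y ↔ Precedes l x y ∧ x ≠ a ∧ x ≠ b := by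
  rw [erase_iff (hnd.erase a) hyb, erase_iff hnd hya, and_assoc]

end Precedes

def enqBefore (b : Behavior) (y : QEvent) : Set QEvent :=
  {x | x ∈ b ∧ x.isEnq = true ∧ Precedes b x y}

def matchedDeqBefore (b : Behavior) (μ : QEvent → Option QEvent) (y : QEvent) : Set QEvent :=
  {x | x ∈ b ∧ x.isDeq = true ∧ Precedes b x y ∧ μ x ≠ none}

theorem enqBefore_erase_erase {b : Behavior} (hnd : b.Nodup) {d e y : QEvent}
    (hdq : d.isDeq = true) (hyd : y ≠ d) (hye : y ≠ e) :
    enqBefore ((b.erase d).erase e) y = enqBefore b y \ {e} := by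
  ext x
  simp only [enqBefore, Set.mem_ofPred_eq, Set.mem_sdiff, Set.mem_singleton_iff,
    hnd.mem_erase_erase_iff, Precedes.erase_erase_iff hnd hyd hye]
  have := fun h : x.isEnq = true => QEvent.ne_of_isEnq_of_isDeq h hdq
  tauto

theorem matchedDeqBefore_erase_erase {b : Behavior} (hnd : b.Nodup) (μ : QEvent → Option QEvent)
    {d e y : QEvent} (heq : e.isEnq = true) (hyd : y ≠ d) (hye : y ≠ e) :
    matchedDeqBefore ((b.erase d).erase e) μ y = matchedDeqBefore b μ y \ {d} := by
  ext x
  simp only [matchedDeqBefore, Set.mem_ofPred_eq, Set.mem_sdiff, Set.mem_singleton_iff,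
    hnd.mem_erase_erase_iff, Precedes.erase_erase_iff hnd hyd hye]
  have := fun h : x.isDeq = true => (QEvent.ne_of_isEnq_of_isDeq heq h).symm
  tauto

namespace SeqWitness

variable {b l : Behavior} {μ : QEvent → Option QEvent}

theorem of_sublist (hnd : b.Nodup) (hw : SeqWitness b μ) (hs : List.Sublist l b)
    (hmatch : ∀ d ∈ l, d.isDeq = true → ∀ e, μ d = some e → e ∈ l)
    (hmatch_inv : ∀ e ∈ l, ∀ d ∈ b, d.isDeq = true → μ d = some e → d ∈ l)
    (hempty : ∀ d ∈ l, d.isDeq = true → μ d = none →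
      (enqBefore l d).ncard = (matchedDeqBefore l μ d).ncard) :
    SeqWitness l μ where
  codom d hd hdq e hμ := ⟨hmatch d hd hdq e hμ, (hw.codom d (hs.subset hd) hdq e hμ).2⟩
  val d hd := hw.val d (hs.subset hd)
  null d hd := hw.null d (hs.subset hd)
  inj d hd d' hd' := hw.inj d (hs.subset hd) d' (hs.subset hd')
  order d hd hdq e hμ :=
    (hw.order d (hs.subset hd) hdq e hμ).to_sublist hs hnd (hmatch d hd hdq e hμ) hd
  fifo e he heq d' hd' hdq' e' hμ' hpe := by
    obtain ⟨d, hd, hdq, hμ, hpd⟩ :=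
      hw.fifo e (hs.subset he) heq d' (hs.subset hd') hdq' e' hμ' (hpe.of_sublist hs)
    have hdl := hmatch_inv e he d hd hdq hμ
    exact ⟨d, hdl, hdq, hμ, hpd.to_sublist hs hnd hdl hd'⟩
  empty := hempty

theorem ncard_enqBefore (hw : SeqWitness b μ) {d : QEvent} (hd : d ∈ b) (hdq : d.isDeq = true)
    (hnull : μ d = none) : (enqBefore b d).ncard = (matchedDeqBefore b μ d).ncard :=
  hw.empty d hd hdq hnull

theorem exists_matchedDeqBefore_of_precedes_null (hnd : b.Nodup) (hw : SeqWitness b μ)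
    {d e : QEvent} (hd : d ∈ b) (hdq : d.isDeq = true) (hnull : μ d = none)
    (heq : e.isEnq = true) (hpe : Precedes b e d) :
    ∃ x ∈ matchedDeqBefore b μ d, μ x = some e := by
  set f : QEvent → QEvent := fun x => (μ x).getD x
  have hf : ∀ x ∈ matchedDeqBefore b μ d, μ x = some (f x) := fun x hx => by
    obtain ⟨y, hy⟩ := Option.ne_none_iff_exists'.1 hx.2.2.2
    simp [f, hy]
  have hmaps : Set.MapsTo f (matchedDeqBefore b μ d) (enqBefore b d) := fun x hx => by
    obtain ⟨hmem, henq⟩ := hw.codom x hx.1 hx.2.1 _ (hf x hx)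
    exact ⟨hmem, henq, (hw.order x hx.1 hx.2.1 _ (hf x hx)).trans hnd hx.2.2.1⟩
  have hinj : Set.InjOn f (matchedDeqBefore b μ d) := fun x hx y hy hxy =>
    hw.inj x hx.1 y hy.1 hx.2.1 hy.2.1 _ (hf x hx) (hxy ▸ hf y hy)
  have hsurj : f '' matchedDeqBefore b μ d = enqBefore b d :=
    Set.eq_of_subset_of_ncard_le hmaps.image_subset
      (by rw [hinj.ncard_image, hw.ncard_enqBefore hd hdq hnull])
      (b.finite_toSet.subset fun _ hx => hx.1)
  have he : e ∈ f '' matchedDeqBefore b μ d := hsurj ▸ ⟨hpe.left_mem, heq, hpe⟩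
  obtain ⟨x, hx, rfl⟩ := he
  exact ⟨x, hx, hf x hx⟩

variable {d e : QEvent}

theorem precedes_of_precedes_null (hnd : b.Nodup) (hw : SeqWitness b μ) (hd : d ∈ b)
    (hdq : d.isDeq = true) (heq : e.isEnq = true) (hμ : μ d = some e) {d' : QEvent}
    (hd' : d' ∈ b) (hdq' : d'.isDeq = true) (hnull : μ d' = none) (hpe : Precedes b e d') :
    Precedes b d d' := by
  obtain ⟨x, hx, hμx⟩ := hw.exists_matchedDeqBefore_of_precedes_null hnd hd' hdq' hnull heq hpe
  obtain rfl := hw.inj x hx.1 d hd hx.2.1 hdq e hμx hμ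
  exact hx.2.2.1

theorem mem_erase_erase_of_match (hnd : b.Nodup) (hw : SeqWitness b μ) (hd : d ∈ b)
    (hdq : d.isDeq = true) (hμ : μ d = some e) {d₁ e₁ : QEvent} (hd₁ : d₁ ∈ (b.erase d).erase e)
    (hdq₁ : d₁.isDeq = true) (hμ₁ : μ d₁ = some e₁) : e₁ ∈ (b.erase d).erase e := by
  obtain ⟨hd₁b, hd₁d, -⟩ := hnd.mem_erase_erase_iff.1 hd₁
  obtain ⟨he₁b, he₁q⟩ := hw.codom d₁ hd₁b hdq₁ e₁ hμ₁
  refine hnd.mem_erase_erase_iff.2 ⟨he₁b, QEvent.ne_of_isEnq_of_isDeq he₁q hdq, ?_⟩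
  rintro rfl
  exact hd₁d (hw.inj d₁ hd₁b d hd hdq₁ hdq _ hμ₁ hμ)

theorem empty_erase_erase (hnd : b.Nodup) (hw : SeqWitness b μ) (hd : d ∈ b)
    (hdq : d.isDeq = true) (he : e ∈ b) (heq : e.isEnq = true) (hμ : μ d = some e) {d' : QEvent}
    (hd' : d' ∈ (b.erase d).erase e) (hdq' : d'.isDeq = true) (hnull : μ d' = none) :
    (enqBefore ((b.erase d).erase e) d').ncard =
      (matchedDeqBefore ((b.erase d).erase e) μ d').ncard := by
  obtain ⟨hd'b, hd'd, hd'e⟩ := hnd.mem_erase_erase_iff.1 hd'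
  rw [enqBefore_erase_erase hnd hdq hd'd hd'e, matchedDeqBefore_erase_erase hnd μ heq hd'd hd'e]
  have hcard := hw.ncard_enqBefore hd'b hdq' hnull
  by_cases hpe : Precedes b e d'
  · have hpd := hw.precedes_of_precedes_null hnd hd hdq heq hμ hd'b hdq' hnull hpe
    have heE : e ∈ enqBefore b d' := ⟨he, heq, hpe⟩
    have hdD : d ∈ matchedDeqBefore b μ d' := ⟨hd, hdq, hpd, by simp [hμ]⟩
    rw [Set.ncard_sdiff_singleton_of_mem heE, Set.ncard_sdiff_singleton_of_mem hdD, hcard]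
  · have hpd : ¬ Precedes b d d' := fun h => hpe ((hw.order d hd hdq e hμ).trans hnd h)
    rw [Set.sdiff_singleton_eq_self (fun h => hpe h.2.2),
      Set.sdiff_singleton_eq_self (fun h => hpd h.2.2.1), hcard]

end SeqWitness

/-- Removing a matched dequeue/enqueue pair preserves the sequential witness
(restricted to the remaining dequeues). -/
theorem seqWitness_remove_pair (b : Behavior) (μ : QEvent → Option QEvent)
    (hnd : b.Nodup) (hw : SeqWitness b μ) (d e : QEvent)
    (hd : d ∈ b) (hdq : d.isDeq = true) (he : e ∈ b) (heq : e.isEnq = true)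
    (hμ : μ d = some e) :
    SeqWitness ((b.erase d).erase e) μ := by
  refine hw.of_sublist hnd (List.erase_sublist.trans List.erase_sublist)
    (fun _ hd₁ hdq₁ _ hμ₁ => hw.mem_erase_erase_of_match hnd hd hdq hμ hd₁ hdq₁ hμ₁)
    (fun e₁ he₁ d₁ hd₁ hdq₁ hμ₁ => ?_) (fun _ => hw.empty_erase_erase hnd hd hdq he heq hμ)
  obtain ⟨-, -, he₁e⟩ := hnd.mem_erase_erase_iff.1 he₁
  refine hnd.mem_erase_erase_iff.2 ⟨hd₁, ?_, (QEvent.ne_of_isEnq_of_isDeq heq hdq₁).symm⟩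
  rintro rfl
  exact he₁e (Option.some_injective _ (hμ₁.symm.trans hμ))
end

section
/- Let b be a behavior with a sequential witness μ, let d be a deq(NULL) event of b, and let b' be the behavior obtained by removing d from b. Then the restriction of μ to the dequeue events of b' is a sequential witness for b'. -/
/-!
A deq(NULL) event `d` is neither an enqueue nor a matched dequeue (`μ d = none`), so it never
occurs among the events that the witness conditions relate to one another. Erasing it keeps the
relative order of the other events, because `Precedes l a c` says exactly that `[a, c]` is a
sublist of `l`.
-/

theorem QEvent.isDeq_of_act_eq_deq {d : QEvent} {y : Option ℕ} (h : d.act = QAction.deq y) :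
    d.isDeq = true := by
  obtain ⟨u, a⟩ := d
  subst h
  rfl

theorem QEvent.ne_of_isEnq_of_isDeq_s6 {e d : QEvent} (he : e.isEnq = true) (hd : d.isDeq = true) :
    e ≠ d := by
  rintro rfl
  obtain ⟨u, _ | _⟩ := e <;> simp [QEvent.isEnq, QEvent.isDeq] at he hd

theorem precedes_iff_pair_sublist {l : Behavior} {a c : QEvent} :
    Precedes l a c ↔ [a, c].Sublist l := by
  rw [List.cons_sublist_iff]
  simp only [List.singleton_sublist, List.mem_iff_getElem?]
  constructor
  · rintro ⟨i, j, hij, hi, hj⟩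
    refine ⟨l.take (i + 1), l.drop (i + 1), (List.take_append_drop _ _).symm,
      ⟨i, by simpa [List.getElem?_take] using hi⟩, ⟨j - (i + 1), ?_⟩⟩
    rwa [List.getElem?_drop, Nat.add_sub_cancel' hij]
  · rintro ⟨r₁, r₂, rfl, ⟨i, hi⟩, ⟨k, hk⟩⟩
    have hi_lt : i < r₁.length := (List.getElem?_eq_some_iff.mp hi).1
    exact ⟨i, r₁.length + k, by omega, by rwa [List.getElem?_append_left hi_lt],
      by rwa [List.getElem?_append_right (by omega), Nat.add_sub_cancel_left]⟩

theorem precedes_erase_iff {l : Behavior} {x a c : QEvent} (ha : a ≠ x) (hc : c ≠ x) :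
    Precedes (l.erase x) a c ↔ Precedes l a c := by
  simp only [precedes_iff_pair_sublist]
  refine ⟨fun h => h.trans List.erase_sublist, fun h => ?_⟩
  have hx : x ∉ [a, c] := by simp [ha.symm, hc.symm]
  simpa [List.erase_of_not_mem hx] using h.erase x

theorem setOf_isEnq_precedes_erase {l : Behavior} (hl : l.Nodup) {x c : QEvent}
    (hx : x.isDeq = true) (hc : c ≠ x) :
    {e | e ∈ l.erase x ∧ e.isEnq = true ∧ Precedes (l.erase x) e c} =
      {e | e ∈ l ∧ e.isEnq = true ∧ Precedes l e c} := by
  ext e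
  have := QEvent.ne_of_isEnq_of_isDeq_s6 (e := e) (d := x)
  have := fun h : e ≠ x => precedes_erase_iff (l := l) h hc
  simp only [Set.mem_ofPred_eq, hl.mem_erase_iff]
  tauto

theorem setOf_matched_precedes_erase {l : Behavior} (hl : l.Nodup) {μ : QEvent → Option QEvent}
    {x c : QEvent} (hx : μ x = none) (hc : c ≠ x) :
    {d | d ∈ l.erase x ∧ d.isDeq = true ∧ Precedes (l.erase x) d c ∧ μ d ≠ none} =
      {d | d ∈ l ∧ d.isDeq = true ∧ Precedes l d c ∧ μ d ≠ none} := by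
  ext d
  have : μ d ≠ none → d ≠ x := by
    rintro h rfl
    exact h hx
  have := fun h : d ≠ x => precedes_erase_iff (l := l) h hc
  simp only [Set.mem_ofPred_eq, hl.mem_erase_iff]
  tauto

/-- Removing a deq(NULL) event preserves the sequential witness (restricted to
the remaining dequeues). -/
theorem seqWitness_remove_deqNull (b : Behavior) (μ : QEvent → Option QEvent)
    (hnd : b.Nodup) (hw : SeqWitness b μ) (d : QEvent)
    (hd : d ∈ b) (hact : d.act = QAction.deq none) :
    SeqWitness (b.erase d) μ := by
  have hdDeq : d.isDeq = true := QEvent.isDeq_of_act_eq_deq hact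
  have hμd : μ d = none := (hw.null d hd hdDeq).mpr hact
  have enq_ne : ∀ e, e.isEnq = true → e ≠ d := fun _ he => QEvent.ne_of_isEnq_of_isDeq_s6 he hdDeq
  have mem : ∀ {e}, e ∈ b.erase d ↔ e ≠ d ∧ e ∈ b := hnd.mem_erase_iff
  refine ⟨?codom, fun d' hd' => hw.val d' (mem.1 hd').2, fun d' hd' => hw.null d' (mem.1 hd').2,
    fun d₁ h₁ d₂ h₂ => hw.inj d₁ (mem.1 h₁).2 d₂ (mem.1 h₂).2, ?order, ?fifo, ?empty⟩
  case codom =>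
    intro d' hd' hq e he
    obtain ⟨heb, hee⟩ := hw.codom d' (mem.1 hd').2 hq e he
    exact ⟨mem.2 ⟨enq_ne e hee, heb⟩, hee⟩
  case order =>
    intro d' hd' hq e he
    rw [precedes_erase_iff (enq_ne e (hw.codom d' (mem.1 hd').2 hq e he).2) (mem.1 hd').1]
    exact hw.order d' (mem.1 hd').2 hq e he
  case fifo =>
    intro e he hee d' hd' hq e' he' hprec
    have he'_ne := enq_ne e' (hw.codom d' (mem.1 hd').2 hq e' he').2
    rw [precedes_erase_iff (mem.1 he).1 he'_ne] at hprec
    obtain ⟨d₀, hd₀, hd₀q, hμd₀, hprec₀⟩ :=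
      hw.fifo e (mem.1 he).2 hee d' (mem.1 hd').2 hq e' he' hprec
    have hd₀_ne : d₀ ≠ d := by
      rintro rfl
      simp [hμd] at hμd₀
    exact ⟨d₀, mem.2 ⟨hd₀_ne, hd₀⟩, hd₀q, hμd₀,
      (precedes_erase_iff hd₀_ne (mem.1 hd').1).2 hprec₀⟩
  case empty =>
    intro d'' hd'' hq hnone
    rw [setOf_isEnq_precedes_erase hnd hdDeq (mem.1 hd'').1,
      setOf_matched_precedes_erase hnd hμd (mem.1 hd'').1]
    exact hw.empty d'' (mem.1 hd'').2 hq hnone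
end

section
/- Let b be a behavior with a sequential witness μ. Then there exists a canonical behavior b_c such that b ≡obs b_c and, for every position i, the i-th element of b is a deq(NULL) event if and only if the i-th element of b_c is a deq(NULL) event. -/
/-!
Under a sequential witness the `k`-th non-NULL dequeue is matched with the `k`-th enqueue:
injectivity and the FIFO condition (v) force the matched enqueues to form, in order, an initial
segment of the enqueue sequence. So pairing each non-NULL dequeue with the next unused enqueue
(`canonMerge`) yields a canonical behavior with the same enqueue and dequeue subsequences. Before
a deq(NULL), condition (vi) says that enqueues and non-NULL dequeues are equally many, so this
rearrangement maps the prefix before it to a prefix of the same length, and the deq(NULL) keeps its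
position.
-/

namespace List

variable {α β : Type*}

theorem pair_sublist_iff {a b : α} {l : List α} :
    [a, b] <+ l ↔
      ∃ (i j : ℕ) (hi : i < l.length) (hj : j < l.length), i < j ∧ l[i] = a ∧ l[j] = b := by
  constructor
  · refine fun h => (pairwise_iff_forall_sublist (R := fun a b => ∃ (i j : ℕ)
      (hi : i < l.length) (hj : j < l.length), i < j ∧ l[i] = a ∧ l[j] = b)).mp ?_ h
    exact pairwise_iff_getElem.mpr fun i j hi hj hij => ⟨i, j, hi, hj, hij, rfl, rfl⟩
  · rintro ⟨i, j, hi, hj, hij, rfl, rfl⟩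
    exact pairwise_iff_getElem.mp (pairwise_iff_forall_sublist.mpr id) i j hi hj hij

theorem map_prefix_of_injOn {s : List α} {l : List β} {f : α → β}
    (hs : s.Nodup) (hl : l.Nodup) (hmem : ∀ x ∈ s, f x ∈ l) (hinj : Set.InjOn f {x | x ∈ s})
    (hclosed : ∀ x ∈ s, ∀ y, [y, f x] <+ l → ∃ x', [x', x] <+ s ∧ f x' = y) :
    s.map f <+: l := by
  rw [prefix_iff_getElem?]
  intro k
  induction k using Nat.strong_induction_on with
  | _ k ih =>
  intro hk
  rw [length_map] at hk
  have ih' : ∀ j (hj : j < k), l[j]? = some (f (s[j]'(hj.trans hk))) := fun j hj => by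
    have := ih j hj (by simpa using hj.trans hk)
    rwa [getElem_map] at this
  have hinj' : ∀ j (hj : j < s.length), f s[j] = f s[k] → j = k := fun j hj h =>
    (hs.getElem_inj_iff).mp (hinj (getElem_mem hj) (getElem_mem hk) h)
  rw [getElem_map]
  obtain ⟨p, hp, hlp⟩ := getElem_of_mem (hmem _ (getElem_mem hk))
  rcases lt_trichotomy p k with hpk | rfl | hkp
  · have := ih' p hpk
    rw [getElem?_eq_getElem hp, hlp, Option.some_inj] at this
    exact absurd (hinj' p (hpk.trans hk) this.symm) hpk.ne
  · rw [getElem?_eq_getElem hp, hlp]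
  · have hkl : k < l.length := hkp.trans hp
    obtain ⟨x', hx's, hx'⟩ := hclosed _ (getElem_mem hk) l[k]
      (pair_sublist_iff.mpr ⟨k, p, hkl, hp, hkp, rfl, hlp⟩)
    obtain ⟨j, k', hj, hk', hjk', rfl, hk'k⟩ := pair_sublist_iff.mp hx's
    obtain rfl : k' = k := (hs.getElem_inj_iff).mp hk'k
    have := ih' j hjk'
    rw [hx', ← getElem?_eq_getElem hkl] at this
    exact absurd ((getElem?_inj (hjk'.trans hkl) hl).mp this) hjk'.ne

theorem ncard_setOf_mem_and {l : List α} (hl : l.Nodup) (p : α → Bool) :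
    {x | x ∈ l ∧ p x}.ncard = (l.filter p).length := by
  classical
  rw [← toFinset_card_of_nodup (hl.filter p), ← Set.ncard_coe_finset]
  congr 1
  ext x
  simp

theorem Perm.getElem?_of_getElem? {l l' : List α} {x : α} (hp : l.Perm l')
    (hl' : l'.Nodup) (h : ∀ j : ℕ, l[j]? = some x → l'[j]? = some x) {i : ℕ}
    (hi : l'[i]? = some x) : l[i]? = some x := by
  obtain ⟨j, hj, rfl⟩ := getElem_of_mem (hp.mem_iff.mpr (mem_of_getElem? hi))
  have hj' := h j (getElem?_eq_getElem hj)
  obtain rfl : j = i :=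
    (getElem?_inj (getElem?_eq_some_iff.mp hj').1 hl').mp (hj'.trans hi.symm)
  exact getElem?_eq_getElem hj

end List

namespace QEvent

def isDeqSome : QEvent → Bool
  | ⟨_, QAction.deq (some _)⟩ => true
  | _ => false

theorem isEnq_eq_not_isDeq (e : QEvent) : e.isEnq = !e.isDeq := by
  rcases e with ⟨_, _ | _⟩ <;> rfl

theorem isDeq_of_isDeqSome {e : QEvent} (h : e.isDeqSome) : e.isDeq := by
  rcases e with ⟨_, _ | _ | _⟩ <;> simp_all [isDeqSome, isDeq]

theorem act_eq_deq_none {e : QEvent} (hd : e.isDeq) (hs : e.isDeqSome = false) :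
    e.act = QAction.deq none := by
  rcases e with ⟨_, _ | _ | _⟩ <;> simp_all [isDeqSome, isDeq]

end QEvent

section Precedes

open List

theorem precedes_iff_pair_sublist_s7 {l : Behavior} {x y : QEvent} :
    Precedes l x y ↔ [x, y] <+ l := by
  simp only [Precedes, getElem?_eq_some_iff, pair_sublist_iff]
  constructor
  · rintro ⟨i, j, hij, ⟨hi, hx⟩, hj, hy⟩
    exact ⟨i, j, hi, hj, hij, hx, hy⟩
  · rintro ⟨i, j, hi, hj, hij, hx, hy⟩
    exact ⟨i, j, hij, ⟨hi, hx⟩, hj, hy⟩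

theorem precedes_iff_mem_take {l : Behavior} (hl : l.Nodup) {i : ℕ} {x d : QEvent}
    (hd : l[i]? = some d) : Precedes l x d ↔ x ∈ l.take i := by
  constructor
  · rintro ⟨i', j, hij, hx, hj⟩
    obtain rfl : j = i :=
      (getElem?_inj (List.getElem?_eq_some_iff.mp hj).1 hl).mp (hj.trans hd.symm)
    exact mem_of_getElem? ((getElem?_take_of_lt hij).trans hx)
  · rw [mem_take_iff_getElem]
    rintro ⟨i', hi', rfl⟩
    exact ⟨i', i, lt_of_lt_of_le hi' (min_le_left _ _), getElem?_eq_getElem _, hd⟩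

end Precedes

def canonMerge : Behavior → Behavior → Behavior
  | [], E => E
  | d :: D, E =>
    if d.isDeqSome then
      match E with
      | [] => d :: canonMerge D []
      | e :: E => e :: d :: canonMerge D E
    else d :: canonMerge D E

theorem canonMerge_perm (D E : Behavior) : (canonMerge D E).Perm (D ++ E) := by
  induction D generalizing E with
  | nil => rfl
  | cons d D ih =>
    by_cases hd : d.isDeqSome
    · rcases E with _ | ⟨e, E⟩
      · simpa [canonMerge, hd] using ih []
      · simp only [canonMerge, hd, if_true]
        exact ((ih E).cons d |>.cons e).trans (List.perm_middle (l₁ := d :: D)).symm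
    · simpa [canonMerge, hd] using ih E

theorem filter_canonMerge_of_left {p : QEvent → Bool} {D : Behavior}
    (hD : ∀ d ∈ D, p d = false) (E : Behavior) : (canonMerge D E).filter p = E.filter p := by
  induction D generalizing E with
  | nil => rfl
  | cons d D ih =>
    simp only [List.forall_mem_cons] at hD
    by_cases hd : d.isDeqSome
    · rcases E with _ | ⟨e, E⟩
      · simp [canonMerge, hd, hD.1, ih hD.2]
      · simp [canonMerge, hd, hD.1, ih hD.2, List.filter_cons]
    · simp [canonMerge, hd, hD.1, ih hD.2]

theorem filter_canonMerge_of_right {p : QEvent → Bool} (D : Behavior) {E : Behavior}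
    (hE : ∀ e ∈ E, p e = false) : (canonMerge D E).filter p = D.filter p := by
  induction D generalizing E with
  | nil => exact List.filter_eq_nil_iff.mpr (by simpa [canonMerge] using hE)
  | cons d D ih =>
    by_cases hd : d.isDeqSome
    · rcases E with _ | ⟨e, E⟩
      · simp [canonMerge, hd, ih hE, List.filter_cons]
      · simp only [List.forall_mem_cons] at hE
        simp [canonMerge, hd, hE.1, ih hE.2, List.filter_cons]
    · simp [canonMerge, hd, ih hE, List.filter_cons]

theorem canonMerge_append {D₁ E₁ : Behavior} (D₂ E₂ : Behavior)
    (h : (D₁.filter QEvent.isDeqSome).length = E₁.length) :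
    canonMerge (D₁ ++ D₂) (E₁ ++ E₂) = canonMerge D₁ E₁ ++ canonMerge D₂ E₂ := by
  induction D₁ generalizing E₁ with
  | nil => simp [List.length_eq_zero_iff.mp h.symm, canonMerge]
  | cons d D₁ ih =>
    by_cases hd : d.isDeqSome
    · rcases E₁ with _ | ⟨e, E₁⟩
      · simp [hd] at h
      · simp [canonMerge, hd, ih (by simpa [hd] using h)]
    · simp [canonMerge, hd, ih (by simpa [hd] using h)]

theorem enqStar_of_forall_isEnq {E : Behavior} (hE : ∀ e ∈ E, e.isEnq) : EnqStar E := by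
  induction E with
  | nil => exact EnqStar.nil
  | cons e E ih =>
    simp only [List.forall_mem_cons] at hE
    rcases e with ⟨u, x | _⟩
    · exact EnqStar.cons u x (ih hE.2)
    · simp [QEvent.isEnq] at hE

theorem canonical_canonMerge {D E E₁ : Behavior}
    (hD : ∀ d ∈ D, d.isDeq) (hE : ∀ e ∈ E, e.isEnq) (hE₁ : E₁ <+: E) (hmatch : List.Forall₂ SameVal E₁ (D.filter QEvent.isDeqSome)) :
    Canonical (canonMerge D E) := by
  induction D generalizing E E₁ with
  | nil => exact Canonical.tail (enqStar_of_forall_isEnq hE)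
  | cons d D ih =>
    simp only [List.forall_mem_cons] at hD
    by_cases hd : d.isDeqSome
    · rw [List.filter_cons_of_pos hd] at hmatch
      obtain ⟨e, E₁, ⟨x, hex, hdx⟩, hrest, rfl⟩ := List.forall₂_cons_right_iff.mp hmatch
      obtain ⟨E, rfl, hprefix⟩ := List.cons_prefix_iff.mp hE₁
      simp only [canonMerge, hd, if_true]
      rcases e with ⟨u, _⟩; rcases d with ⟨v, _⟩
      cases hex; cases hdx
      exact Canonical.pair u v x (ih hD.2 (fun e he => hE e (.tail _ he)) hprefix hrest)
    · rw [List.filter_cons_of_neg hd] at hmatch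
      simp only [canonMerge, hd]
      rcases d with ⟨u, _⟩
      cases QEvent.act_eq_deq_none hD.1 (by simpa using hd)
      exact Canonical.deqNull u (ih hD.2 hE hE₁ hmatch)

def canonize (b : Behavior) : Behavior :=
  canonMerge (b.filter QEvent.isDeq) (b.filter QEvent.isEnq)

theorem canonize_perm (b : Behavior) : (canonize b).Perm b := by
  refine (canonMerge_perm _ _).trans ?_
  rw [List.filter_congr fun e _ => QEvent.isEnq_eq_not_isDeq e]
  exact List.filter_append_perm _ b

theorem filter_isEnq_canonize (b : Behavior) :
    (canonize b).filter QEvent.isEnq = b.filter QEvent.isEnq := by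
  rw [canonize, filter_canonMerge_of_left, List.filter_filter]
  · simp
  · simp +contextual [QEvent.isEnq_eq_not_isDeq]

theorem filter_isDeq_canonize (b : Behavior) :
    (canonize b).filter QEvent.isDeq = b.filter QEvent.isDeq := by
  rw [canonize, filter_canonMerge_of_right, List.filter_filter]
  · simp
  · simp +contextual [QEvent.isEnq_eq_not_isDeq]

theorem filter_isDeqSome_filter_isDeq (l : Behavior) :
    (l.filter QEvent.isDeq).filter QEvent.isDeqSome = l.filter QEvent.isDeqSome := by
  rw [List.filter_filter]
  exact List.filter_congr fun e _ => by
    cases h : e.isDeqSome <;> simp [QEvent.isDeq_of_isDeqSome, h]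

theorem canonize_append {t : Behavior} (r : Behavior)
    (h : (t.filter QEvent.isDeqSome).length = (t.filter QEvent.isEnq).length) :
    canonize (t ++ r) = canonize t ++ canonize r := by
  simp only [canonize, List.filter_append]
  exact canonMerge_append _ _ (by rwa [filter_isDeqSome_filter_isDeq])

theorem canonize_cons_of_deq_none {d : QEvent} (hd : d.act = QAction.deq none) (r : Behavior) :
    canonize (d :: r) = d :: canonize r := by
  rcases d with ⟨u, _⟩
  cases hd
  rfl

namespace SeqWitness

variable {b : Behavior} {μ : QEvent → Option QEvent}

theorem isDeqSome_iff (hw : SeqWitness b μ) {d : QEvent} (hd : d ∈ b) :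
    d.isDeqSome ↔ d.isDeq ∧ μ d ≠ none := by
  by_cases hdeq : d.isDeq
  · rw [Ne, hw.null d hd hdeq]
    rcases d with ⟨_, _ | _ | _⟩ <;> simp_all [QEvent.isDeqSome, QEvent.isDeq]
  · exact iff_of_false (fun h => hdeq (QEvent.isDeq_of_isDeqSome h)) (fun h => hdeq h.1)

theorem exists_prefix_forall₂_sameVal (hw : SeqWitness b μ) (hnd : b.Nodup) :
    ∃ E₁, E₁ <+: b.filter QEvent.isEnq ∧
      List.Forall₂ SameVal E₁ (b.filter QEvent.isDeqSome) := by
  set ds := b.filter QEvent.isDeqSome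
  let m : QEvent → QEvent := fun d => (μ d).getD d
  have hds : ∀ d ∈ ds, d ∈ b ∧ d.isDeqSome ∧ d.isDeq ∧ μ d = some (m d) := by
    intro d hd
    obtain ⟨hdb, hs⟩ := List.mem_filter.mp hd
    obtain ⟨hdeq, hμ⟩ := (hw.isDeqSome_iff hdb).mp hs
    obtain ⟨e, he⟩ := Option.ne_none_iff_exists'.mp hμ
    exact ⟨hdb, hs, hdeq, by simp [m, he]⟩
  refine ⟨ds.map m, List.map_prefix_of_injOn (hnd.filter _) (hnd.filter _) ?_ ?_ ?_, ?_⟩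
  · intro d hd
    obtain ⟨hdb, -, hdeq, hμ⟩ := hds d hd
    exact List.mem_filter.mpr (hw.codom d hdb hdeq _ hμ)
  · intro d hd d' hd' h
    obtain ⟨hdb, -, hdeq, hμ⟩ := hds d hd
    obtain ⟨hdb', -, hdeq', hμ'⟩ := hds d' hd'
    exact hw.inj d hdb d' hdb' hdeq hdeq' _ hμ (h ▸ hμ')
  · intro d hd e he
    obtain ⟨hdb, hs, hdeq, hμ⟩ := hds d hd
    obtain ⟨heb, heq⟩ := List.mem_filter.mp (he.subset List.mem_cons_self)
    obtain ⟨d₀, hd₀b, hd₀, hμ₀, hprec⟩ := hw.fifo e heb heq d hdb hdeq _ hμ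
      (precedes_iff_pair_sublist_s7.mpr (he.trans List.filter_sublist))
    have hd₀s : d₀.isDeqSome := (hw.isDeqSome_iff hd₀b).mpr ⟨hd₀, by simp [hμ₀]⟩
    refine ⟨d₀, ?_, ?_⟩
    · simpa [hd₀s, hs] using (precedes_iff_pair_sublist_s7.mp hprec).filter QEvent.isDeqSome
    · have := (hds d₀ (List.mem_filter.mpr ⟨hd₀b, hd₀s⟩)).2.2.2
      rw [hμ₀] at this
      exact (Option.some.inj this).symm
  · rw [List.forall₂_map_left_iff, List.forall₂_same]
    intro d hd
    obtain ⟨hdb, -, hdeq, hμ⟩ := hds d hd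
    exact hw.val d hdb hdeq _ hμ

theorem canonical_canonize (hw : SeqWitness b μ) (hnd : b.Nodup) : Canonical (canonize b) := by
  obtain ⟨E₁, hE₁, hmatch⟩ := hw.exists_prefix_forall₂_sameVal hnd
  exact canonical_canonMerge (fun d hd => (List.mem_filter.mp hd).2)
    (fun e he => (List.mem_filter.mp he).2) hE₁
    (by rwa [filter_isDeqSome_filter_isDeq])

theorem length_filter_isEnq_take (hw : SeqWitness b μ) (hnd : b.Nodup) {i : ℕ} {d : QEvent}
    (hd : b[i]? = some d) (hnull : d.act = QAction.deq none) :
    ((b.take i).filter QEvent.isEnq).length = ((b.take i).filter QEvent.isDeqSome).length := by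
  have hdb : d ∈ b := List.mem_of_getElem? hd
  have hdeq : d.isDeq := by rcases d with ⟨_, _⟩; cases hnull; rfl
  have htake : (b.take i).Nodup := hnd.sublist (List.take_sublist _ _)
  have hcard := hw.empty d hdb hdeq ((hw.null d hdb hdeq).mpr hnull)
  rw [← List.ncard_setOf_mem_and htake, ← List.ncard_setOf_mem_and htake]
  convert hcard using 2 <;> ext x <;>
    simp only [Set.mem_ofPred_eq, precedes_iff_mem_take hnd hd]
  · exact ⟨fun h => ⟨List.mem_of_mem_take h.1, h.2, h.1⟩, fun h => ⟨h.2.2, h.2.1⟩⟩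
  · constructor
    · rintro ⟨hx, hs⟩
      have hxb := List.mem_of_mem_take hx
      exact ⟨hxb, ((hw.isDeqSome_iff hxb).mp hs).1, hx, ((hw.isDeqSome_iff hxb).mp hs).2⟩
    · rintro ⟨hxb, hdeq, hx, hμ⟩
      exact ⟨hx, (hw.isDeqSome_iff hxb).mpr ⟨hdeq, hμ⟩⟩

theorem getElem?_canonize (hw : SeqWitness b μ) (hnd : b.Nodup) {i : ℕ} {d : QEvent}
    (hd : b[i]? = some d) (hnull : d.act = QAction.deq none) : (canonize b)[i]? = some d := by
  obtain ⟨hi, hbi⟩ := List.getElem?_eq_some_iff.mp hd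
  have hsplit : b = b.take i ++ d :: b.drop (i + 1) := by
    rw [← hbi, ← List.drop_eq_getElem_cons hi, List.take_append_drop]
  have hbal := hw.length_filter_isEnq_take hnd hd hnull
  have hlen : (canonize (b.take i)).length = i := by
    rw [(canonize_perm _).length_eq, List.length_take_of_le hi.le]
  rw [hsplit, canonize_append _ hbal.symm,
    canonize_cons_of_deq_none hnull, List.getElem?_append_right hlen.le, hlen, Nat.sub_self]
  rfl

end SeqWitness

/-- A behavior with a sequential witness has an observationally equivalent
canonical behavior with deq(NULL) events at the same positions. -/
theorem seqWitness_canonical (b : Behavior) (μ : QEvent → Option QEvent)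
    (hnd : b.Nodup) (hw : SeqWitness b μ) :
    ∃ bc : Behavior, Canonical bc ∧ ObsEquiv b bc ∧
      ∀ i : ℕ, (∃ u, b[i]? = some ⟨u, QAction.deq none⟩) ↔
               (∃ u, bc[i]? = some ⟨u, QAction.deq none⟩) := by
  refine ⟨canonize b, hw.canonical_canonize hnd,
    ⟨(filter_isEnq_canonize b).symm, (filter_isDeq_canonize b).symm⟩, fun i => ⟨?_, ?_⟩⟩
  · rintro ⟨u, h⟩
    exact ⟨u, hw.getElem?_canonize hnd h rfl⟩
  · rintro ⟨u, h⟩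
    have hnd' : (canonize b).Nodup := (canonize_perm b).nodup_iff.mpr hnd
    exact ⟨u, (canonize_perm b).symm.getElem?_of_getElem? hnd'
      (fun j hj => hw.getElem?_canonize hnd hj rfl) h⟩
end

section
/- A queue behavior b is legal if and only if b has a sequential witness. -/
/-!
The queue content reached after a prefix of a behavior is represented by its pending enqueue
events `P` (`Enqueues P q`), and both directions are proved for `P ++ b` by induction on `b`.
An enqueue just moves from `b` to the end of `P`. A dequeue `d` of `x` needs `P = E :: P'` with `E`
enqueuing `x`: a legal run lets `μ` send `d` to `E`, and conversely FIFO forces `μ d = E`; in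
both cases `E :: (P' ++ d :: b)` has a witness exactly when `P' ++ b` has. A NULL dequeue needs
`P = []`, and this is what the counting clause says when exactly the enqueues of `P` precede it.
-/

namespace QEvent

variable {e : QEvent}

theorem isEnq_of_act_eq {x : ℕ} (h : e.act = .enq x) : e.isEnq = true := by
  obtain ⟨u, a⟩ := e; subst h; rfl

theorem isDeq_of_act_eq {y : Option ℕ} (h : e.act = .deq y) : e.isDeq = true := by
  obtain ⟨u, a⟩ := e; subst h; rfl

theorem isEnq_eq_false_of_isDeq (h : e.isDeq = true) : e.isEnq = false := by
  obtain ⟨u, _ | _⟩ := e <;> simp_all [isEnq, isDeq]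

theorem isDeq_eq_false_of_isEnq (h : e.isEnq = true) : e.isDeq = false := by
  obtain ⟨u, _ | _⟩ := e <;> simp_all [isEnq, isDeq]

theorem ne_of_isEnq_of_isDeq_s9 {d : QEvent} (he : e.isEnq = true) (hd : d.isDeq = true) :
    e ≠ d := by
  rintro rfl; simp [isEnq_eq_false_of_isDeq hd] at he

end QEvent

open QEvent

section Precedes

variable {l l₁ l₂ : Behavior} {a d z w : QEvent}

theorem Precedes.right_mem_s9 (h : Precedes l z w) : w ∈ l := by
  obtain ⟨-, j, -, -, hj⟩ := h; exact List.mem_of_getElem? hj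

theorem precedes_cons_iff : Precedes (a :: l) z w ↔ z = a ∧ w ∈ l ∨ Precedes l z w := by
  constructor
  · rintro ⟨_ | i, _ | j, hij, hi, hj⟩
    · omega
    · simp only [List.getElem?_cons_zero, List.getElem?_cons_succ, Option.some_inj] at hi hj
      exact Or.inl ⟨hi.symm, List.mem_of_getElem? hj⟩
    · omega
    · exact Or.inr ⟨i, j, by omega, hi, hj⟩
  · rintro (⟨rfl, hw⟩ | ⟨i, j, hij, hi, hj⟩)
    · obtain ⟨j, hj⟩ := List.mem_iff_getElem?.1 hw
      exact ⟨0, j + 1, by omega, rfl, hj⟩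
    · exact ⟨i + 1, j + 1, by omega, hi, hj⟩

theorem precedes_cons_iff_of_ne (hz : z ≠ a) : Precedes (a :: l) z w ↔ Precedes l z w := by
  simp [precedes_cons_iff, hz]

theorem not_precedes_cons_self (ha : a ∉ l) : ¬ Precedes (a :: l) z a := by
  rw [precedes_cons_iff]
  rintro (⟨-, h⟩ | h)
  exacts [ha h, ha h.right_mem_s9]

theorem precedes_append_cons_iff (hz : z ≠ d) (hw : w ≠ d) :
    Precedes (l₁ ++ d :: l₂) z w ↔ Precedes (l₁ ++ l₂) z w := by
  induction l₁ with
  | nil => exact precedes_cons_iff_of_ne hz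
  | cons a l₁ ih => simp [precedes_cons_iff, ih, hw]

theorem precedes_append_cons_of_mem (hw : w ∈ l₂) : Precedes (l₁ ++ d :: l₂) d w := by
  induction l₁ with
  | nil => exact precedes_cons_iff.2 (Or.inl ⟨rfl, hw⟩)
  | cons a l₁ ih => exact precedes_cons_iff.2 (Or.inr ih)

theorem precedes_append_cons_right_iff (h : (l₁ ++ d :: l₂).Nodup) :
    Precedes (l₁ ++ d :: l₂) z d ↔ z ∈ l₁ := by
  induction l₁ with
  | nil => simpa using not_precedes_cons_self (List.nodup_cons.1 h).1
  | cons a l₁ ih =>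
    rw [List.cons_append, precedes_cons_iff, ih h.of_cons]
    simp

end Precedes

theorem List.Nodup.ncard_setOf_mem_and {α : Type*} {l : List α} (hl : l.Nodup) (p : α → Bool) :
    {z | z ∈ l ∧ p z = true}.ncard = l.countP p := by
  classical
  rw [List.countP_eq_length_filter, ← List.toFinset_card_of_nodup (hl.filter p),
    ← Set.ncard_coe_finset]
  congr
  ext z
  simp

/-- Clause (vi) of a sequential witness at `d`. -/
def QueueEmptyBefore (l : Behavior) (μ : QEvent → Option QEvent) (d : QEvent) : Prop :=
  {e | e ∈ l ∧ e.isEnq = true ∧ Precedes l e d}.ncard =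
    {d' | d' ∈ l ∧ d'.isDeq = true ∧ Precedes l d' d ∧ μ d' ≠ none}.ncard

section QueueEmptyBefore

variable {E d z : QEvent} {l₁ l₂ P b : Behavior} {μ : QEvent → Option QEvent}

theorem queueEmptyBefore_append_cons_iff (h : (l₁ ++ d :: l₂).Nodup) :
    QueueEmptyBefore (l₁ ++ d :: l₂) μ d ↔
      l₁.countP isEnq = l₁.countP (fun z => z.isDeq && (μ z).isSome) := by
  have hl₁ := h.sublist (List.sublist_append_left _ _)
  rw [QueueEmptyBefore, ← hl₁.ncard_setOf_mem_and, ← hl₁.ncard_setOf_mem_and]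
  simp only [precedes_append_cons_right_iff h, Bool.and_eq_true, Option.isSome_iff_ne_none]
  congr! 3 with e <;> aesop

theorem queueEmptyBefore_cons_self (h : (d :: l₂).Nodup) : QueueEmptyBefore (d :: l₂) μ d :=
  (queueEmptyBefore_append_cons_iff (l₁ := []) h).2 rfl

theorem queueEmptyBefore_cons_iff (h : (d :: b).Nodup) (hd : d.isDeq = true) (hμ : μ d = none)
    (hz : z ∈ b) : QueueEmptyBefore (d :: b) μ z ↔ QueueEmptyBefore b μ z := by
  obtain ⟨b₁, b₂, rfl⟩ := List.append_of_mem hz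
  rw [← List.cons_append, queueEmptyBefore_append_cons_iff h,
    queueEmptyBefore_append_cons_iff h.of_cons]
  simp [isEnq_eq_false_of_isDeq hd, hμ]

theorem queueEmptyBefore_cons_append_cons_iff (h : (E :: (P ++ d :: b)).Nodup)
    (hE : E.isEnq = true) (hd : d.isDeq = true) (hμ : μ d = some E) (hz : z ∈ b) :
    QueueEmptyBefore (E :: (P ++ d :: b)) μ z ↔ QueueEmptyBefore (P ++ b) μ z := by
  obtain ⟨b₁, b₂, rfl⟩ := List.append_of_mem hz
  have hL : E :: (P ++ d :: (b₁ ++ z :: b₂)) = (E :: (P ++ d :: b₁)) ++ z :: b₂ := by simp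
  have hS : P ++ (b₁ ++ z :: b₂) = (P ++ b₁) ++ z :: b₂ := by simp
  have hndS : ((P ++ b₁) ++ z :: b₂).Nodup := hS ▸ (List.nodup_middle.1 h.of_cons).of_cons
  rw [hL] at h ⊢
  rw [hS, queueEmptyBefore_append_cons_iff h, queueEmptyBefore_append_cons_iff hndS]
  simp [List.countP_append, hE, hd, isEnq_eq_false_of_isDeq hd, isDeq_eq_false_of_isEnq hE, hμ]
  omega

end QueueEmptyBefore

namespace SeqWitness

variable {l : Behavior} {μ ν : QEvent → Option QEvent}

theorem congr (hw : SeqWitness l μ) (h : ∀ z ∈ l, μ z = ν z) : SeqWitness l ν where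
  codom z hz hzq e he := hw.codom z hz hzq e (by rwa [h z hz])
  val z hz hzq e he := hw.val z hz hzq e (by rwa [h z hz])
  null z hz hzq := h z hz ▸ hw.null z hz hzq
  inj z hz z' hz' hzq hzq' e he he' :=
    hw.inj z hz z' hz' hzq hzq' e (by rwa [h z hz]) (by rwa [h z' hz'])
  order z hz hzq e he := hw.order z hz hzq e (by rwa [h z hz])
  fifo e he hee z hz hzq e' he' hp := by
    obtain ⟨d, hd, hdq, hμd, hp'⟩ := hw.fifo e he hee z hz hzq e' (by rwa [h z hz]) hp
    exact ⟨d, hd, hdq, by rwa [← h d hd], hp'⟩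
  empty z hz hzq hν := by
    rw [hw.empty z hz hzq (by rwa [h z hz])]
    congr 1
    exact Set.ext fun d' => and_congr_right fun hd' => by rw [h d' hd']

theorem of_forall_isEnq (h : ∀ z ∈ l, z.isEnq = true) (μ : QEvent → Option QEvent) :
    SeqWitness l μ where
  codom z hz hzq := absurd rfl (ne_of_isEnq_of_isDeq_s9 (h z hz) hzq)
  val z hz hzq := absurd rfl (ne_of_isEnq_of_isDeq_s9 (h z hz) hzq)
  null z hz hzq := absurd rfl (ne_of_isEnq_of_isDeq_s9 (h z hz) hzq)
  inj z hz _ _ hzq := absurd rfl (ne_of_isEnq_of_isDeq_s9 (h z hz) hzq)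
  order z hz hzq := absurd rfl (ne_of_isEnq_of_isDeq_s9 (h z hz) hzq)
  fifo _ _ _ z hz hzq := absurd rfl (ne_of_isEnq_of_isDeq_s9 (h z hz) hzq)
  empty z hz hzq := absurd rfl (ne_of_isEnq_of_isDeq_s9 (h z hz) hzq)

end SeqWitness

section DeqNull

variable {d : QEvent} {b : Behavior} {μ : QEvent → Option QEvent}

theorem SeqWitness.of_cons (hw : SeqWitness (d :: b) μ) (hnd : (d :: b).Nodup)
    (hd : d.isDeq = true) (hμ : μ d = none) : SeqWitness b μ where
  codom z hz hzq e he := by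
    obtain ⟨he', hee⟩ := hw.codom z (.tail _ hz) hzq e he
    exact ⟨(List.mem_cons.1 he').resolve_left (ne_of_isEnq_of_isDeq_s9 hee hd), hee⟩
  val z hz := hw.val z (.tail _ hz)
  null z hz := hw.null z (.tail _ hz)
  inj z hz z' hz' := hw.inj z (.tail _ hz) z' (.tail _ hz')
  order z hz hzq e he :=
    (precedes_cons_iff_of_ne (ne_of_isEnq_of_isDeq_s9 (hw.codom z (.tail _ hz) hzq e he).2 hd)).1
      (hw.order z (.tail _ hz) hzq e he)
  fifo e he hee z hz hzq e' he' hp := by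
    obtain ⟨d', hd', hdq', hμd', hp'⟩ := hw.fifo e (.tail _ he) hee z (.tail _ hz) hzq e' he'
      ((precedes_cons_iff_of_ne (ne_of_isEnq_of_isDeq_s9 hee hd)).2 hp)
    have hne : d' ≠ d := by rintro rfl; simp [hμ] at hμd'
    exact ⟨d', (List.mem_cons.1 hd').resolve_left hne, hdq', hμd',
      (precedes_cons_iff_of_ne hne).1 hp'⟩
  empty z hz hzq hμz :=
    (queueEmptyBefore_cons_iff hnd hd hμ hz).1 (hw.empty z (.tail _ hz) hzq hμz)

theorem SeqWitness.cons (hw : SeqWitness b μ) (hnd : (d :: b).Nodup)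
    (hd : d.act = .deq none) (hμ : μ d = none) : SeqWitness (d :: b) μ where
  codom z hz hzq e he := by
    obtain rfl | hzb := List.mem_cons.1 hz
    · simp [hμ] at he
    · exact (hw.codom z hzb hzq e he).imp (.tail _) id
  val z hz hzq e he := by
    obtain rfl | hzb := List.mem_cons.1 hz
    · simp [hμ] at he
    · exact hw.val z hzb hzq e he
  null z hz hzq := by
    obtain rfl | hzb := List.mem_cons.1 hz
    · simp [hμ, hd]
    · exact hw.null z hzb hzq
  inj z hz z' hz' hzq hzq' e he he' := by
    obtain rfl | hzb := List.mem_cons.1 hz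
    · simp [hμ] at he
    obtain rfl | hz'b := List.mem_cons.1 hz'
    · simp [hμ] at he'
    exact hw.inj z hzb z' hz'b hzq hzq' e he he'
  order z hz hzq e he := by
    obtain rfl | hzb := List.mem_cons.1 hz
    · simp [hμ] at he
    · exact (precedes_cons_iff_of_ne (ne_of_isEnq_of_isDeq_s9 (hw.codom z hzb hzq e he).2
        (isDeq_of_act_eq hd))).2 (hw.order z hzb hzq e he)
  fifo e he hee z hz hzq e' he' hp := by
    obtain rfl | hzb := List.mem_cons.1 hz
    · simp [hμ] at he'
    have hed : e ≠ d := ne_of_isEnq_of_isDeq_s9 hee (isDeq_of_act_eq hd)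
    obtain ⟨d', hd', hdq', hμd', hp'⟩ := hw.fifo e ((List.mem_cons.1 he).resolve_left hed) hee
      z hzb hzq e' he' ((precedes_cons_iff_of_ne hed).1 hp)
    have hne : d' ≠ d := by rintro rfl; exact (List.nodup_cons.1 hnd).1 hd'
    exact ⟨d', .tail _ hd', hdq', hμd', (precedes_cons_iff_of_ne hne).2 hp'⟩
  empty z hz hzq hμz := by
    obtain rfl | hzb := List.mem_cons.1 hz
    · exact queueEmptyBefore_cons_self hnd
    · exact (queueEmptyBefore_cons_iff hnd (isDeq_of_act_eq hd) hμ hzb).2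
        (hw.empty z hzb hzq hμz)

end DeqNull

section DeqSome

variable {E d z w : QEvent} {P b : Behavior} {μ : QEvent → Option QEvent}

theorem sublist_cons_append_cons : (P ++ b).Sublist (E :: (P ++ d :: b)) :=
  ((List.sublist_cons_self d b).append_left P).cons E

theorem notMem_of_nodup_cons_append_cons (h : (E :: (P ++ d :: b)).Nodup) :
    E ∉ P ++ b ∧ d ∉ P ++ b := by
  obtain ⟨hE, h⟩ := List.nodup_cons.1 h
  exact ⟨fun h' => hE (by simp_all), (List.nodup_cons.1 (List.nodup_middle.1 h)).1⟩

theorem mem_of_mem_cons_append_cons (h : z ∈ E :: (P ++ d :: b)) (hE : z ≠ E) (hd : z ≠ d) :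
    z ∈ P ++ b := by
  simp_all

theorem mem_of_mem_append_of_isDeq (hP : ∀ p ∈ P, p.isEnq = true) (hz : z ∈ P ++ b)
    (hzq : z.isDeq = true) : z ∈ b :=
  (List.mem_append.1 hz).resolve_left fun h => ne_of_isEnq_of_isDeq_s9 (hP z h) hzq rfl

theorem precedes_cons_append_cons_iff (hE : E ∉ P ++ b) (hd : d ∉ P ++ b) (hz : z ∈ P ++ b)
    (hw : w ∈ P ++ b) : Precedes (E :: (P ++ d :: b)) z w ↔ Precedes (P ++ b) z w := by
  rw [precedes_cons_iff_of_ne (ne_of_mem_of_not_mem hz hE),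
    precedes_append_cons_iff (ne_of_mem_of_not_mem hz hd) (ne_of_mem_of_not_mem hw hd)]

theorem SeqWitness.of_cons_append_cons (hw : SeqWitness (E :: (P ++ d :: b)) μ)
    (hnd : (E :: (P ++ d :: b)).Nodup) (hP : ∀ p ∈ P, p.isEnq = true) (hd : d.isDeq = true)
    (hμ : μ d = some E) : SeqWitness (P ++ b) μ := by
  obtain ⟨hES, hdS⟩ := notMem_of_nodup_cons_append_cons hnd
  have hSL : P ++ b ⊆ E :: (P ++ d :: b) := sublist_cons_append_cons.subset
  have hE : E.isEnq = true := (hw.codom d (by simp) hd E hμ).2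
  have hcodom : ∀ z ∈ P ++ b, z.isDeq = true → ∀ e, μ z = some e →
      e ∈ P ++ b ∧ e.isEnq = true := by
    intro z hz hzq e he
    obtain ⟨he', hee⟩ := hw.codom z (hSL hz) hzq e he
    refine ⟨mem_of_mem_cons_append_cons he' ?_ (ne_of_isEnq_of_isDeq_s9 hee hd), hee⟩
    rintro rfl
    exact hdS (hw.inj z (hSL hz) d (by simp) hzq hd e he hμ ▸ hz)
  refine
    { codom := hcodom
      val := fun z hz => hw.val z (hSL hz)
      null := fun z hz => hw.null z (hSL hz)
      inj := fun z hz z' hz' => hw.inj z (hSL hz) z' (hSL hz')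
      order := fun z hz hzq e he => ?_
      fifo := fun e he hee z hz hzq e' he' hp => ?_
      empty := fun z hz hzq hμz =>
        (queueEmptyBefore_cons_append_cons_iff hnd hE hd hμ
          (mem_of_mem_append_of_isDeq hP hz hzq)).1 (hw.empty z (hSL hz) hzq hμz) }
  · exact (precedes_cons_append_cons_iff hES hdS (hcodom z hz hzq e he).1 hz).1
      (hw.order z (hSL hz) hzq e he)
  · obtain ⟨d', hd', hdq', hμd', hp'⟩ := hw.fifo e (hSL he) hee z (hSL hz) hzq e' he'
      ((precedes_cons_append_cons_iff hES hdS he (hcodom z hz hzq e' he').1).2 hp)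
    have hd'S : d' ∈ P ++ b := by
      refine mem_of_mem_cons_append_cons hd' (ne_of_isEnq_of_isDeq_s9 hE hdq').symm ?_
      rintro rfl
      exact hES (Option.some_injective _ (hμ.symm.trans hμd') ▸ he)
    exact ⟨d', hd'S, hdq', hμd', (precedes_cons_append_cons_iff hES hdS hd'S hz).1 hp'⟩

theorem SeqWitness.cons_append_cons (hw : SeqWitness (P ++ b) μ)
    (hnd : (E :: (P ++ d :: b)).Nodup) (hP : ∀ p ∈ P, p.isEnq = true) {x : ℕ}
    (hE : E.act = .enq x) (hd : d.act = .deq (some x)) (hμ : μ d = some E) :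
    SeqWitness (E :: (P ++ d :: b)) μ := by
  obtain ⟨hES, hdS⟩ := notMem_of_nodup_cons_append_cons hnd
  have hSL : P ++ b ⊆ E :: (P ++ d :: b) := sublist_cons_append_cons.subset
  have hEenq : E.isEnq = true := isEnq_of_act_eq hE
  have hdq : d.isDeq = true := isDeq_of_act_eq hd
  have hdeq : ∀ z ∈ E :: (P ++ d :: b), z.isDeq = true → z = d ∨ z ∈ P ++ b :=
    fun z hz hzq => or_iff_not_imp_left.2 <| mem_of_mem_cons_append_cons hz (ne_of_isEnq_of_isDeq_s9 hEenq hzq).symm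
  have hSE : ∀ z ∈ P ++ b, z.isDeq = true → μ z ≠ some E := fun z hz hzq he =>
    hES (hw.codom z hz hzq E he).1
  refine
    { codom := fun z hz hzq e he => ?_
      val := fun z hz hzq e he => ?_
      null := fun z hz hzq => ?_
      inj := fun z hz z' hz' hzq hzq' e he he' => ?_
      order := fun z hz hzq e he => ?_
      fifo := fun e he hee z hz hzq e' he' hp => ?_
      empty := fun z hz hzq hμz => ?_ }
  · obtain rfl | hzS := hdeq z hz hzq
    · obtain rfl := Option.some_injective _ (hμ.symm.trans he)
      exact ⟨List.mem_cons_self, hEenq⟩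
    · exact (hw.codom z hzS hzq e he).imp (@hSL e) id
  · obtain rfl | hzS := hdeq z hz hzq
    · obtain rfl := Option.some_injective _ (hμ.symm.trans he)
      exact ⟨x, hE, hd⟩
    · exact hw.val z hzS hzq e he
  · obtain rfl | hzS := hdeq z hz hzq
    · simp [hμ, hd]
    · exact hw.null z hzS hzq
  · obtain rfl | hzS := hdeq z hz hzq <;> obtain rfl | hz'S := hdeq z' hz' hzq'
    · rfl
    · exact absurd (hμ.symm.trans he ▸ he') (hSE z' hz'S hzq')
    · exact absurd (hμ.symm.trans he' ▸ he) (hSE z hzS hzq)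
    · exact hw.inj z hzS z' hz'S hzq hzq' e he he'
  · obtain rfl | hzS := hdeq z hz hzq
    · obtain rfl := Option.some_injective _ (hμ.symm.trans he)
      exact precedes_cons_iff.2 (Or.inl ⟨rfl, by simp⟩)
    · exact (precedes_cons_append_cons_iff hES hdS (hw.codom z hzS hzq e he).1 hzS).2
        (hw.order z hzS hzq e he)
  · obtain rfl | hzS := hdeq z hz hzq
    · obtain rfl := Option.some_injective _ (hμ.symm.trans he')
      exact absurd hp (not_precedes_cons_self (List.nodup_cons.1 hnd).1)
    by_cases heE : e = E
    · rw [heE]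
      exact ⟨d, by simp, hdq, hμ, precedes_cons_iff.2 <| Or.inr <|
        precedes_append_cons_of_mem (mem_of_mem_append_of_isDeq hP hzS hzq)⟩
    have heS : e ∈ P ++ b := mem_of_mem_cons_append_cons he heE (ne_of_isEnq_of_isDeq_s9 hee hdq)
    have he'S : e' ∈ P ++ b := (hw.codom z hzS hzq e' he').1
    obtain ⟨d', hd', hdq', hμd', hp'⟩ := hw.fifo e heS hee z hzS hzq e' he'
      ((precedes_cons_append_cons_iff hES hdS heS he'S).1 hp)
    exact ⟨d', hSL hd', hdq', hμd', (precedes_cons_append_cons_iff hES hdS hd' hzS).2 hp'⟩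
  · have hzS : z ∈ P ++ b := (hdeq z hz hzq).resolve_left (by rintro rfl; simp [hμ] at hμz)
    exact (queueEmptyBefore_cons_append_cons_iff hnd hEenq hdq hμ
      (mem_of_mem_append_of_isDeq hP hzS hzq)).2 (hw.empty z hzS hzq hμz)

end DeqSome

section QueueHead

variable {E d : QEvent} {P b : Behavior} {μ : QEvent → Option QEvent}

theorem SeqWitness.eq_nil_of_deqNull (hw : SeqWitness (P ++ d :: b) μ)
    (hnd : (P ++ d :: b).Nodup) (hP : ∀ p ∈ P, p.isEnq = true) (hd : d.act = .deq none) :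
    P = [] := by
  have hdq : d.isDeq = true := isDeq_of_act_eq hd
  have := (queueEmptyBefore_append_cons_iff hnd).1 (hw.empty d (by simp) hdq
    ((hw.null d (by simp) hdq).2 hd))
  rw [List.countP_eq_length.2 hP, List.countP_eq_zero.2 fun p hp => by
    simp [isDeq_eq_false_of_isEnq (hP p hp)]] at this
  exact List.length_eq_zero_iff.1 this

theorem SeqWitness.exists_eq_cons_of_deq (hw : SeqWitness (P ++ d :: b) μ)
    (hnd : (P ++ d :: b).Nodup) (hP : ∀ p ∈ P, p.isEnq = true) (hd : d.isDeq = true)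
    (hμ : μ d = some E) : ∃ P', P = E :: P' := by
  have hEP : E ∈ P := (precedes_append_cons_right_iff hnd).1 (hw.order d (by simp) hd E hμ)
  obtain _ | ⟨E₀, P'⟩ := P
  · simp at hEP
  obtain rfl | hEP' := List.mem_cons.1 hEP
  · exact ⟨P', rfl⟩
  -- otherwise FIFO makes a dequeue before `d` take `E₀`, but only enqueues precede `d`
  obtain ⟨d', -, hdq', -, hp⟩ := hw.fifo E₀ (by simp) (hP E₀ (by simp)) d (by simp) hd E hμ
    (precedes_cons_iff.2 (Or.inl ⟨rfl, by simp [hEP']⟩))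
  have hd' := (precedes_append_cons_right_iff hnd).1 hp
  exact absurd rfl (ne_of_isEnq_of_isDeq_s9 (hP d' hd') hdq')

end QueueHead

def Enqueues (P : Behavior) (q : List ℕ) : Prop :=
  List.Forall₂ (fun e x => e.act = .enq x) P q

theorem Enqueues.isEnq {P : Behavior} {q : List ℕ} (h : Enqueues P q) :
    ∀ p ∈ P, p.isEnq = true := by
  induction h with
  | nil => simp
  | cons he _ ih => simpa [isEnq_of_act_eq he] using ih

theorem Enqueues.append_singleton {P : Behavior} {q : List ℕ} (h : Enqueues P q) (u x : ℕ) :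
    Enqueues (P ++ [⟨u, .enq x⟩]) (q ++ [x]) :=
  List.rel_append h (.cons rfl .nil)

theorem LegalFrom.exists_seqWitness {q : List ℕ} {b : Behavior} (hl : LegalFrom q b)
    {P : Behavior} (hP : Enqueues P q) (hnd : (P ++ b).Nodup) :
    ∃ μ, SeqWitness (P ++ b) μ := by
  induction hl generalizing P with
  | nil => exact ⟨fun _ => none, .of_forall_isEnq (by simpa using hP.isEnq) _⟩
  | @cons q q' a rest u hstep _ ih =>
    cases hstep with
    | enq q x => simpa using ih (hP.append_singleton u x) (by simpa using hnd)
    | deq x q' =>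
      obtain _ | @⟨E, _, P', _, hE, hP'⟩ := hP
      have hS := notMem_of_nodup_cons_append_cons hnd
      obtain ⟨μ, hw⟩ := ih hP' (hnd.sublist sublist_cons_append_cons)
      exact ⟨Function.update μ ⟨u, .deq (some x)⟩ (some E),
        (hw.congr fun z hz => (Function.update_of_ne (ne_of_mem_of_not_mem hz hS.2) _ _).symm)
          |>.cons_append_cons hnd (Enqueues.isEnq hP') hE rfl (Function.update_self ..)⟩
    | deqNull =>
      obtain _ | _ := hP
      obtain ⟨μ, hw⟩ := ih .nil hnd.of_cons
      have hd := (List.nodup_cons.1 hnd).1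
      exact ⟨Function.update μ ⟨u, .deq none⟩ none,
        (hw.congr fun z hz => (Function.update_of_ne (ne_of_mem_of_not_mem hz hd) _ _).symm)
          |>.cons hnd rfl (Function.update_self ..)⟩

theorem SeqWitness.legalFrom {b P : Behavior} {q : List ℕ} {μ : QEvent → Option QEvent}
    (hw : SeqWitness (P ++ b) μ) (hP : Enqueues P q) (hnd : (P ++ b).Nodup) :
    LegalFrom q b := by
  induction b generalizing P q with
  | nil => exact .nil q
  | cons e rest ih =>
    obtain ⟨u, _ | _ | x⟩ := e
    · exact .cons u (.enq q _) <|
        ih (by simpa using hw) (hP.append_singleton u _) (by simpa using hnd)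
    · obtain rfl := hw.eq_nil_of_deqNull hnd hP.isEnq rfl
      obtain _ | _ := hP
      have hμ := (hw.null ⟨u, .deq none⟩ (by simp) rfl).2 rfl
      exact .cons u .deqNull (ih (P := []) (hw.of_cons hnd rfl hμ) .nil hnd.of_cons)
    · obtain ⟨E, hμ⟩ := Option.ne_none_iff_exists'.1 fun h => by
        simpa using (hw.null ⟨u, .deq (some x)⟩ (by simp) rfl).1 h
      obtain ⟨P', rfl⟩ := hw.exists_eq_cons_of_deq hnd hP.isEnq rfl hμ
      obtain _ | ⟨hE, hP'⟩ := hP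
      obtain ⟨y, hEy, hdy⟩ := hw.val _ (by simp) rfl E hμ
      obtain rfl : x = y := by simpa using hdy
      obtain rfl := QAction.enq.inj (hE.symm.trans hEy)
      exact .cons u (.deq _ _) <| ih (hw.of_cons_append_cons hnd (Enqueues.isEnq hP') rfl hμ)
        hP' (hnd.sublist sublist_cons_append_cons)

/-- A queue behavior is legal iff it has a sequential witness. -/
theorem legal_iff_seqWitness (b : Behavior) (hnd : b.Nodup) :
    Legal b ↔ ∃ μ : QEvent → Option QEvent, SeqWitness b μ :=
  ⟨fun hl => LegalFrom.exists_seqWitness hl (P := []) .nil hnd,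
    fun ⟨_, hw⟩ => SeqWitness.legalFrom (P := []) hw .nil hnd⟩
end

section
/- Let c be a complete history, Match an ordered mapping for c, and d⊥ a dequeue event of c with Match(d⊥)=⊥. Then Bad(c,d⊥) ∩ Before(c,d⊥) = ∅ if and only if there exist a set D of dequeue events of c and a set E of enqueue events of c such that: (D ∪ E) ∩ After(c,d⊥) = ∅; D ∪ E is closed under ≺_c (i.e., if a ∈ D ∪ E and b ≺_c a then b ∈ D ∪ E); and Before(c,d⊥) ∩ Enq(c) ⊆ E ⊆ Match(D). -/
/-- Invocation and response actions of queue events. -/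
inductive HAction : Type
  | invEnq : ℕ → ℕ → HAction
  | resEnq : ℕ → HAction
  | invDeq : ℕ → HAction
  | resDeq : ℕ → Option ℕ → HAction
  deriving DecidableEq

def HAction.uid : HAction → ℕ
  | HAction.invEnq u _ => u
  | HAction.resEnq u => u
  | HAction.invDeq u => u
  | HAction.resDeq u _ => u

def HAction.isInv : HAction → Bool
  | HAction.invEnq _ _ => true
  | HAction.invDeq _ => true
  | _ => false

/-- Whether the action belongs to an enqueue method. -/
def HAction.isEnqM : HAction → Bool
  | HAction.invEnq _ _ => true
  | HAction.resEnq _ => true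
  | _ => false

abbrev History := List HAction

/-- Enqueue events (identified by their uid) invoked in `c`. -/
def EnqSet (c : History) : Set ℕ := {u | ∃ x, HAction.invEnq u x ∈ c}

/-- Dequeue events (identified by their uid) invoked in `c`. -/
def DeqSet (c : History) : Set ℕ := {u | HAction.invDeq u ∈ c}

/-- `u ≺_c u'`: the response of `u` occurs before the invocation of `u'` in `c`. -/
def HPrec (c : History) (u u' : ℕ) : Prop :=
  ∃ (i j : ℕ) (a a' : HAction), i < j ∧ (c)[i]? = some a ∧ a.isInv = false ∧ a.uid = u ∧
    (c)[j]? = some a' ∧ a'.isInv = true ∧ a'.uid = u'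

/-- Event `u` is pending in `c`: invoked but not responded. -/
def Pending (c : History) (u : ℕ) : Prop :=
  (∃ a ∈ c, a.isInv = true ∧ a.uid = u) ∧ ¬(∃ a ∈ c, a.isInv = false ∧ a.uid = u)

/-- A history is complete if it has no pending events. -/
def CompleteH (c : History) : Prop := ∀ u, ¬ Pending c u

/-- Well-formed history: unique invocations and responses per uid, and every
response is preceded by its matching invocation (same uid, same method). -/
structure WellFormed (c : History) : Prop where
  invNodup : ((c.filter (fun a => a.isInv)).map HAction.uid).Nodup
  resNodup : ((c.filter (fun a => !a.isInv)).map HAction.uid).Nodup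
  resMatched : ∀ (j : ℕ) (a' : HAction), (c)[j]? = some a' → a'.isInv = false →
    ∃ (i : ℕ) (a : HAction), i < j ∧ (c)[i]? = some a ∧ a.isInv = true ∧ a.uid = a'.uid ∧ a.isEnqM = a'.isEnqM

/-- A safe mapping for a complete history `c`. -/
structure SafeMapping (c : History) (M : ℕ → Option ℕ) : Prop where
  codom : ∀ d ∈ DeqSet c, ∀ e, M d = some e → e ∈ EnqSet c
  val : ∀ d ∈ DeqSet c, ∀ e, M d = some e →
        ∃ x, HAction.invEnq e x ∈ c ∧ HAction.resDeq d (some x) ∈ c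
  null : ∀ d ∈ DeqSet c, (M d = none ↔ HAction.resDeq d none ∈ c)
  inj : ∀ d ∈ DeqSet c, ∀ d' ∈ DeqSet c, ∀ e, M d = some e → M d' = some e → d = d'

/-- An ordered mapping for a complete history `c`. -/
structure OrderedMapping (c : History) (M : ℕ → Option ℕ)
    extends SafeMapping c M : Prop where
  notAfter : ∀ d ∈ DeqSet c, ∀ e, M d = some e → ¬ HPrec c d e
  fifo : ∀ e ∈ EnqSet c, ∀ d' ∈ DeqSet c, ∀ e', M d' = some e' → HPrec c e e' →
         ∃ d ∈ DeqSet c, M d = some e ∧ ¬ HPrec c d' d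

/-- The least set `Bad(c, d⊥)` of enqueue events. -/
inductive Bad (c : History) (M : ℕ → Option ℕ) (dbot : ℕ) : ℕ → Prop
  | base (e : ℕ) : e ∈ EnqSet c →
      (HPrec c dbot e ∨ ∀ d ∈ DeqSet c, M d = some e → HPrec c dbot d) →
      Bad c M dbot e
  | stepE (ei e : ℕ) : Bad c M dbot ei → e ∈ EnqSet c → HPrec c ei e →
      Bad c M dbot e
  | stepD (ei e d : ℕ) : Bad c M dbot ei → e ∈ EnqSet c → d ∈ DeqSet c →
      M d = some e → HPrec c ei d → Bad c M dbot e

/-- A linearization witness for a complete history `c`. -/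
structure LinWitness (c : History) (M : ℕ → Option ℕ)
    extends OrderedMapping c M : Prop where
  wit : ∀ d ∈ DeqSet c, HAction.resDeq d none ∈ c →
        ∀ e, Bad c M d e → ¬ HPrec c e d

/-!
Given `D ∪ E`, induction on `Bad(c, d⊥)` shows that no bad enqueue lies in `E`: `E` is
matched into `D`, so a base enqueue in `E` would put `d⊥` before an event of `D ∪ E`, and
each propagation rule would pull a bad enqueue into the `≺_c`-closed set `D ∪ E`.
Conversely, take the events lying neither after `d⊥` nor after a bad enqueue (and, for
enqueues, not bad themselves). This set is downward closed by transitivity of `≺_c`, and a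
good enqueue in it is matched to a dequeue in it, since otherwise the base or the `stepD`
rule would make it bad.
-/

theorem List.index_eq_of_nodup_map_filter {α β : Type*} {l : List α} {p : α → Bool}
    {f : α → β} (h : ((l.filter p).map f).Nodup) {i j : ℕ} {a b : α}
    (hi : l[i]? = some a) (hj : l[j]? = some b) (ha : p a = true) (hb : p b = true)
    (hf : f a = f b) : i = j := by
  have hpair : l.Pairwise (fun x y => p x = true → p y = true → f x ≠ f y) := by
    rw [List.Nodup, List.pairwise_map] at h
    exact List.pairwise_filter.mp (by simpa using h)
  rw [List.pairwise_iff_getElem] at hpair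
  rw [List.getElem?_eq_some_iff] at hi hj
  obtain ⟨hil, rfl⟩ := hi
  obtain ⟨hjl, rfl⟩ := hj
  rcases lt_trichotomy i j with hlt | heq | hgt
  · exact absurd hf (hpair i j hil hjl hlt ha hb)
  · exact heq
  · exact absurd hf.symm (hpair j i hjl hil hgt hb ha)

namespace WellFormed

variable {c : History}

theorem inv_lt_res (hwf : WellFormed c) {i j : ℕ} {v r : HAction}
    (hi : (c)[i]? = some v) (hv : v.isInv = true)
    (hj : (c)[j]? = some r) (hr : r.isInv = false) (hu : v.uid = r.uid) : i < j := by
  obtain ⟨k, a, hkj, hk, ha, hau, -⟩ := hwf.resMatched j r hj hr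
  have : k = i :=
    List.index_eq_of_nodup_map_filter hwf.invNodup hk hi ha hv (hau.trans hu.symm)
  omega

theorem hPrec_trans (hwf : WellFormed c) {a b d : ℕ}
    (hab : HPrec c a b) (hbd : HPrec c b d) : HPrec c a d := by
  obtain ⟨i, j, ra, ib, hij, hi, hra, hua, hj, hib, hub⟩ := hab
  obtain ⟨i', j', rb, id, hij', hi', hrb, hub', hj', hid, hud⟩ := hbd
  have : j < i' := hwf.inv_lt_res hj hib hi' hrb (hub.trans hub'.symm)
  exact ⟨i, j', ra, id, by omega, hi, hra, hua, hj', hid, hud⟩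

theorem hPrec_asymm (hwf : WellFormed c) {a b : ℕ}
    (hab : HPrec c a b) : ¬ HPrec c b a := by
  rintro ⟨i', j', rb, ia, hij', hi', hrb, hub', hj', hia, hua'⟩
  obtain ⟨i, j, ra, ib, hij, hi, hra, hua, hj, hib, hub⟩ := hab
  have : j < i' := hwf.inv_lt_res hj hib hi' hrb (hub.trans hub'.symm)
  have : j' < i := hwf.inv_lt_res hj' hia hi hra (hua'.trans hua.symm)
  omega

theorem mem_enqSet_or_mem_deqSet_of_hPrec (hwf : WellFormed c) {b a : ℕ}
    (h : HPrec c b a) : b ∈ EnqSet c ∨ b ∈ DeqSet c := by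
  obtain ⟨i, -, r, -, -, hi, hr, hrb, -⟩ := h
  obtain ⟨k, v, -, hk, hv, hvr, -⟩ := hwf.resMatched i r hi hr
  have hmem : v ∈ c := List.mem_iff_getElem?.mpr ⟨k, hk⟩
  cases v with
  | invEnq u x =>
      obtain rfl : u = b := hvr.trans hrb
      exact Or.inl ⟨x, hmem⟩
  | invDeq u =>
      obtain rfl : u = b := hvr.trans hrb
      exact Or.inr hmem
  | resEnq _ => simp [HAction.isInv] at hv
  | resDeq _ _ => simp [HAction.isInv] at hv

theorem disjoint_enqSet_deqSet (hwf : WellFormed c) : Disjoint (EnqSet c) (DeqSet c) := by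
  refine Set.disjoint_left.mpr fun u ⟨x, hx⟩ hu => ?_
  obtain ⟨i, hi⟩ := List.mem_iff_getElem?.mp hx
  obtain ⟨j, hj⟩ := List.mem_iff_getElem?.mp (show HAction.invDeq u ∈ c from hu)
  obtain rfl : i = j := List.index_eq_of_nodup_map_filter hwf.invNodup hi hj rfl rfl rfl
  simp [hi] at hj

end WellFormed

theorem Bad.mem_enqSet {c : History} {M : ℕ → Option ℕ} {dbot e : ℕ}
    (h : Bad c M dbot e) : e ∈ EnqSet c := by
  cases h <;> assumption

section Witness

variable {c : History} {M : ℕ → Option ℕ} {dbot : ℕ}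

theorem Bad.not_mem_of_closed (hwf : WellFormed c) (hM : SafeMapping c M) {D E : Set ℕ}
    (hD : D ⊆ DeqSet c) (hafter : ∀ u ∈ D ∪ E, ¬ HPrec c dbot u)
    (hclosed : ∀ a ∈ D ∪ E, ∀ b, HPrec c b a → b ∈ D ∪ E)
    (hmatch : ∀ e ∈ E, ∃ d ∈ D, M d = some e) {e : ℕ} (hbad : Bad c M dbot e) :
    e ∉ E := by
  have not_mem_D {ei : ℕ} (hei : Bad c M dbot ei) : ei ∉ D := fun h =>
    Set.disjoint_left.mp hwf.disjoint_enqSet_deqSet hei.mem_enqSet (hD h)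
  induction hbad with
  | base e _ hbase =>
      intro he
      obtain ⟨d, hdD, hMd⟩ := hmatch e he
      rcases hbase with hprec | hall
      · exact hafter e (Or.inr he) hprec
      · exact hafter d (Or.inl hdD) (hall d (hD hdD) hMd)
  | stepE ei e hei _ hprec ih =>
      intro he
      exact (hclosed e (Or.inr he) ei hprec).elim (not_mem_D hei) ih
  | stepD ei e d hei _ hd hMd hprec ih =>
      intro he
      obtain ⟨d', hd'D, hMd'⟩ := hmatch e he
      obtain rfl : d = d' := hM.inj d hd d' (hD hd'D) e hMd hMd'
      exact (hclosed d (Or.inl hd'D) ei hprec).elim (not_mem_D hei) ih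

def Unaffected (c : History) (M : ℕ → Option ℕ) (dbot u : ℕ) : Prop :=
  ¬ HPrec c dbot u ∧ ∀ e, Bad c M dbot e → ¬ HPrec c e u

theorem Unaffected.of_hPrec (hwf : WellFormed c) {u b : ℕ}
    (hu : Unaffected c M dbot u) (hbu : HPrec c b u) : Unaffected c M dbot b :=
  ⟨fun h => hu.1 (hwf.hPrec_trans h hbu),
    fun e he h => hu.2 e he (hwf.hPrec_trans h hbu)⟩

theorem exists_closed_of_bad_not_before (hwf : WellFormed c)
    (hlin : ∀ e, Bad c M dbot e → ¬ HPrec c e dbot) :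
    ∃ D E : Set ℕ, D ⊆ DeqSet c ∧ E ⊆ EnqSet c ∧
      (∀ u ∈ D ∪ E, ¬ HPrec c dbot u) ∧
      (∀ a ∈ D ∪ E, ∀ b, HPrec c b a → b ∈ D ∪ E) ∧
      (∀ e ∈ EnqSet c, HPrec c e dbot → e ∈ E) ∧
      (∀ e ∈ E, ∃ d ∈ D, M d = some e) := by
  set D := {d | d ∈ DeqSet c ∧ Unaffected c M dbot d}
  set E := {e | e ∈ EnqSet c ∧ Unaffected c M dbot e ∧ ¬ Bad c M dbot e}
  have unaffected_of_mem {u : ℕ} (hu : u ∈ D ∪ E) : Unaffected c M dbot u := by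
    rcases hu with hu | hu
    exacts [hu.2, hu.2.1]
  refine ⟨D, E, fun _ hd => hd.1, fun _ he => he.1,
    fun u hu => (unaffected_of_mem hu).1, ?_, ?_, ?_⟩
  · intro a ha b hba
    have hb := (unaffected_of_mem ha).of_hPrec hwf hba
    rcases hwf.mem_enqSet_or_mem_deqSet_of_hPrec hba with hbE | hbD
    · exact Or.inr ⟨hbE, hb, fun hbad => (unaffected_of_mem ha).2 b hbad hba⟩
    · exact Or.inl ⟨hbD, hb⟩
  · intro e he hprec
    exact ⟨he, ⟨hwf.hPrec_asymm hprec, fun e' hbad h => hlin e' hbad (hwf.hPrec_trans h hprec)⟩,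
      fun hbad => hlin e hbad hprec⟩
  · rintro e ⟨he, ⟨hafter, -⟩, hgood⟩
    have hnot_base : ¬ (HPrec c dbot e ∨ ∀ d ∈ DeqSet c, M d = some e → HPrec c dbot d) :=
      fun h => hgood (Bad.base e he h)
    push Not at hnot_base
    obtain ⟨-, d, hd, hMd, hd_after⟩ := hnot_base
    exact ⟨d, ⟨hd, hd_after, fun e' hbad h => hgood (Bad.stepD e' e d hbad he hd hMd h)⟩, hMd⟩

end Witness

theorem alt_lin_witness_general (c : History) (M : ℕ → Option ℕ) (dbot : ℕ)
    (hwf : WellFormed c)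
    (hM : OrderedMapping c M) :
    (∀ e, Bad c M dbot e → ¬ HPrec c e dbot) ↔
    ∃ D E : Set ℕ, D ⊆ DeqSet c ∧ E ⊆ EnqSet c ∧
      (∀ u ∈ D ∪ E, ¬ HPrec c dbot u) ∧
      (∀ a ∈ D ∪ E, ∀ b, HPrec c b a → b ∈ D ∪ E) ∧
      (∀ e ∈ EnqSet c, HPrec c e dbot → e ∈ E) ∧
      (∀ e ∈ E, ∃ d ∈ D, M d = some e) := by
  refine ⟨exists_closed_of_bad_not_before hwf, ?_⟩
  rintro ⟨D, E, hD, -, hafter, hclosed, hbefore, hmatch⟩ e hbad hprec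
  exact hbad.not_mem_of_closed hwf hM.toSafeMapping hD hafter hclosed hmatch
    (hbefore e hbad.mem_enqSet hprec)

/-- Alternative characterization of `Bad(c,d⊥) ∩ Before(c,d⊥) = ∅` via the
existence of suitable sets of dequeue and enqueue events. -/
theorem alt_lin_witness (c : History) (M : ℕ → Option ℕ) (dbot : ℕ)
    (hwf : WellFormed c) (hcomp : CompleteH c)
    (hM : OrderedMapping c M) (hd : dbot ∈ DeqSet c) (hnull : M dbot = none) :
    (∀ e, Bad c M dbot e → ¬ HPrec c e dbot) ↔
    ∃ D E : Set ℕ, D ⊆ DeqSet c ∧ E ⊆ EnqSet c ∧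
      (∀ u ∈ D ∪ E, ¬ HPrec c dbot u) ∧
      (∀ a ∈ D ∪ E, ∀ b, HPrec c b a → b ∈ D ∪ E) ∧
      (∀ e ∈ EnqSet c, HPrec c e dbot → e ∈ E) ∧
      (∀ e ∈ E, ∃ d ∈ D, M d = some e) :=
  alt_lin_witness_general c M dbot hwf hM
end

section
/- Let c_1, c_2, … be an infinite sequence of complete histories (each with every value enqueued at most once) such that no c_i contains any of the VFresh, VRepet, VOrd, VWit violations, for every i the history c_i is a prefix of c_{i+1}, and the number of dequeue events in c_i is strictly less than that of c_{i+1}. If c_1 contains an enqueue event enq(x), then there exists some c_j containing a dequeue event deq(x). -/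
/-- Each value is enqueued at most once in `c`. -/
def UniqueEnqVals (c : History) : Prop :=
  ∀ u u' x, HAction.invEnq u x ∈ c → HAction.invEnq u' x ∈ c → u = u'

/-- A dequeue returns a value never enqueued (or enqueued only after it). -/
def VFresh (c : History) : Prop :=
  ∃ d x, HAction.resDeq d (some x) ∈ c ∧
    ((∀ e, HAction.invEnq e x ∉ c) ∨ ∃ e, HAction.invEnq e x ∈ c ∧ HPrec c d e)

/-- Two distinct dequeues return the same non-NULL value. -/
def VRepet (c : History) : Prop :=
  ∃ d d' x, d ≠ d' ∧ HAction.resDeq d (some x) ∈ c ∧ HAction.resDeq d' (some x) ∈ c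

/-- Values dequeued out of order. -/
def VOrd (c : History) : Prop :=
  ∃ ex ey x y dx, HAction.invEnq ey y ∈ c ∧ HAction.invEnq ex x ∈ c ∧ HPrec c ey ex ∧
    HAction.resDeq dx (some x) ∈ c ∧
    ((∀ d, HAction.resDeq d (some y) ∉ c) ∨
     ∃ dy, HAction.resDeq dy (some y) ∈ c ∧ HPrec c dx dy)

/-- A dequeue returns NULL although the queue is never logically empty during it. -/
def VWit (c : History) : Prop :=
  ∃ (u : ℕ) (c0 cd c3 : History),
    c = c0 ++ [HAction.invDeq u] ++ cd ++ [HAction.resDeq u none] ++ c3 ∧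
    ∀ c1 c2, cd = c1 ++ c2 →
      ∃ e x, HAction.invEnq e x ∈ (c0 ++ [HAction.invDeq u] ++ c1) ∧
             HAction.resEnq e ∈ (c0 ++ [HAction.invDeq u] ++ c1) ∧
             ∀ d, HAction.resDeq d (some x) ∈ c →
               HAction.invDeq d ∉ (c0 ++ [HAction.invDeq u] ++ c1)

/-- Number of dequeue events invoked in a history. -/
def numDeq (c : History) : ℕ :=
  (c.filter (fun a => match a with | HAction.invDeq _ => true | _ => false)).length

/-!
Suppose `x` is never dequeued and let `n` be the length of `c 0`. In `L = c (n + 1)` every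
dequeue returning a value `z` returns one enqueued in `c 0`: VFresh forbids values never enqueued,
and an `enq z` invoked after `enq x` has responded would let `z` overtake `x` (VOrd). By VRepet
these dequeues return distinct values, so at most `n` dequeues of `L` are non-NULL, while `L` has
at least `n + 1` dequeues not invoked in `c 0`. One of them returns NULL, and throughout its
execution `x` is completely enqueued and never dequeued: a VWit violation.
-/

namespace HAction

def isInvDeq : HAction → Bool
  | invDeq _ => true
  | _ => false

def enqValue? : HAction → Option ℕ
  | invEnq _ x => some x
  | _ => none

end HAction

open HAction

theorem List.IsPrefix.length_le_of_getElem?_eq_of_not_mem {α : Type*} {l₁ l₂ : List α}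
    (h : l₁ <+: l₂) {n : ℕ} {b : α} (hn : l₂[n]? = some b) (hb : b ∉ l₁) :
    l₁.length ≤ n := by
  obtain ⟨t, rfl⟩ := h
  by_contra! hlt
  rw [List.getElem?_append_left hlt] at hn
  exact hb (List.mem_of_getElem? hn)

theorem List.isPrefix_of_forall_isPrefix_succ {α : Type*} {l : ℕ → List α}
    (h : ∀ i, l i <+: l (i + 1)) (n : ℕ) : l 0 <+: l n := by
  induction n with
  | zero => exact List.prefix_refl _
  | succ n ih => exact ih.trans (h n)

theorem hPrec_of_mem_prefix {c L : History} (hpre : c <+: L) {a b : HAction} (ha : a ∈ c)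
    (ha' : a.isInv = false) (hb : b ∈ L) (hb' : b ∉ c) (hb'' : b.isInv = true) :
    HPrec L a.uid b.uid := by
  obtain ⟨i, hi⟩ := List.mem_iff_getElem?.1 ha
  obtain ⟨n, hn⟩ := List.mem_iff_getElem?.1 hb
  have hic : i < c.length := (List.getElem?_eq_some_iff.1 hi).1
  refine ⟨i, n, a, b, hic.trans_le (hpre.length_le_of_getElem?_eq_of_not_mem hn hb'), ?_,
    ha', rfl, hn, hb'', rfl⟩
  obtain ⟨t, rfl⟩ := hpre
  rwa [List.getElem?_append_left hic]

namespace WellFormed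

variable {c : History} (hwf : WellFormed c)
include hwf

theorem eq_of_uid_eq {a b : HAction} (ha : a ∈ c) (hb : b ∈ c) (ha' : a.isInv = true)
    (hb' : b.isInv = true) (huid : a.uid = b.uid) : a = b :=
  List.inj_on_of_nodup_map hwf.invNodup (List.mem_filter.2 ⟨ha, ha'⟩)
    (List.mem_filter.2 ⟨hb, hb'⟩) huid

theorem isEnqM_eq_of_uid_eq {a b : HAction} (ha : a ∈ c) (hb : b ∈ c) (ha' : a.isInv = true)
    (hb' : b.isInv = false) (huid : a.uid = b.uid) : a.isEnqM = b.isEnqM := by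
  obtain ⟨n, hn⟩ := List.mem_iff_getElem?.1 hb
  obtain ⟨i, a'', -, hi, hinv, huid', hm⟩ := hwf.resMatched n b hn hb'
  rwa [hwf.eq_of_uid_eq ha (List.mem_of_getElem? hi) ha' hinv (huid.trans huid'.symm)]

theorem exists_invDeq_before {n d : ℕ} {v : Option ℕ} (hn : (c)[n]? = some (resDeq d v)) :
    ∃ i < n, (c)[i]? = some (invDeq d) := by
  obtain ⟨i, a, hin, hi, hinv, huid, hm⟩ := hwf.resMatched n _ hn rfl
  refine ⟨i, hin, ?_⟩
  cases a <;> simp_all [isInv, uid, isEnqM]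

end WellFormed

theorem CompleteH.exists_res {c : History} (hc : CompleteH c) {a : HAction} (ha : a ∈ c)
    (ha' : a.isInv = true) : ∃ b ∈ c, b.isInv = false ∧ b.uid = a.uid := by
  by_contra! h
  exact hc a.uid ⟨⟨a, ha, ha', rfl⟩, fun ⟨b, hb, hb', huid⟩ => h b hb hb' huid⟩

theorem resEnq_mem_of_invEnq_mem {c : History} (hwf : WellFormed c) (hc : CompleteH c)
    {e y : ℕ} (he : invEnq e y ∈ c) : resEnq e ∈ c := by
  obtain ⟨b, hb, hb', huid⟩ := hc.exists_res he rfl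
  have hm := hwf.isEnqM_eq_of_uid_eq he hb rfl hb' huid.symm
  cases b with
  | resEnq e' => exact (show e' = e from huid) ▸ hb
  | _ => simp_all [isInv, isEnqM]

theorem exists_resDeq_of_invDeq_mem {c : History} (hwf : WellFormed c) (hc : CompleteH c)
    {d : ℕ} (hd : invDeq d ∈ c) : ∃ v, resDeq d v ∈ c := by
  obtain ⟨b, hb, hb', huid⟩ := hc.exists_res hd rfl
  have hm := hwf.isEnqM_eq_of_uid_eq hd hb rfl hb' huid.symm
  cases b with
  | resDeq d' v => exact ⟨v, (show d' = d from huid) ▸ hb⟩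
  | _ => simp_all [isInv, isEnqM]

def deqIds (c : History) : Finset ℕ := ((c.filter isInvDeq).map uid).toFinset

theorem mem_deqIds {c : History} {d : ℕ} : d ∈ deqIds c ↔ invDeq d ∈ c := by
  simp only [deqIds, List.mem_toFinset, List.mem_map, List.mem_filter]
  constructor
  · rintro ⟨a, ⟨ha, ha'⟩, rfl⟩
    cases a <;> simp_all [isInvDeq, uid]
  · exact fun h => ⟨_, ⟨h, rfl⟩, rfl⟩

theorem card_deqIds_le (c : History) : (deqIds c).card ≤ numDeq c :=
  (List.toFinset_card_le _).trans_eq (List.length_map _)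

theorem WellFormed.card_deqIds {c : History} (hwf : WellFormed c) :
    (deqIds c).card = numDeq c := by
  refine (List.toFinset_card_of_nodup (hwf.invNodup.sublist ?_)).trans (List.length_map _)
  refine List.Sublist.map _ (List.monotone_filter_right _ fun a h => ?_)
  cases a <;> simp_all [isInvDeq, isInv]

def enqValues (c : History) : Finset ℕ := (c.filterMap enqValue?).toFinset

theorem mem_enqValues {c : History} {x : ℕ} : x ∈ enqValues c ↔ ∃ e, invEnq e x ∈ c := by
  simp only [enqValues, List.mem_toFinset, List.mem_filterMap]
  constructor
  · rintro ⟨(⟨e, y⟩ | _ | _ | _), ha, hx⟩ <;> simp only [enqValue?, reduceCtorEq] at hx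
    exact ⟨e, Option.some_injective _ hx ▸ ha⟩
  · exact fun ⟨e, he⟩ => ⟨_, he, rfl⟩

theorem card_enqValues_le (c : History) : (enqValues c).card ≤ c.length :=
  (List.toFinset_card_le _).trans (List.length_filterMap_le _ _)

theorem exists_null_resDeq_of_lt_numDeq {c L : History} (hwf : WellFormed L)
    (hc : CompleteH L) (hrep : ¬ VRepet L) {V : Finset ℕ}
    (hV : ∀ d z, resDeq d (some z) ∈ L → z ∈ V) (hlt : numDeq c + V.card < numDeq L) :
    ∃ d, invDeq d ∉ c ∧ resDeq d none ∈ L := by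
  by_contra! hnull
  have hcard : (deqIds L \ deqIds c).card ≤ V.card := by
    refine Finset.card_le_card_of_forall_subsingleton (fun d z => resDeq d (some z) ∈ L) ?_ ?_
    · intro d hd
      rw [Finset.mem_sdiff, mem_deqIds, mem_deqIds] at hd
      obtain ⟨v, hv⟩ := exists_resDeq_of_invDeq_mem hwf hc hd.1
      cases v with
      | none => exact absurd hv (hnull d hd.2)
      | some z => exact ⟨z, hV d z hv, hv⟩
    · intro z _ d₁ hd₁ d₂ hd₂
      by_contra hne
      exact hrep ⟨d₁, d₂, z, hne, hd₁.2, hd₂.2⟩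
  have hnew := Finset.le_card_sdiff (deqIds c) (deqIds L)
  rw [hwf.card_deqIds] at hnew
  have := card_deqIds_le c
  omega

theorem exists_invEnq_mem_of_resDeq_mem {c L : History} (hpre : c <+: L)
    (hfresh : ¬ VFresh L) (hord : ¬ VOrd L) {u x : ℕ} (hx : invEnq u x ∈ c)
    (hx' : resEnq u ∈ c) (hlost : ∀ d, resDeq d (some x) ∉ L) {d z : ℕ}
    (hz : resDeq d (some z) ∈ L) : ∃ e, invEnq e z ∈ c := by
  obtain ⟨e, he⟩ : ∃ e, invEnq e z ∈ L := by
    by_contra! h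
    exact hfresh ⟨d, z, hz, Or.inl h⟩
  by_contra! hnot
  exact hord ⟨e, u, z, x, d, hpre.subset hx, he,
    hPrec_of_mem_prefix hpre hx' rfl he (hnot e) rfl, hz, Or.inl hlost⟩

theorem vWit_of_null_resDeq {c L : History} (hwf : WellFormed L) (hpre : c <+: L)
    {u x d : ℕ} (hx : invEnq u x ∈ c) (hx' : resEnq u ∈ c)
    (hlost : ∀ d, resDeq d (some x) ∉ L) (hd : invDeq d ∉ c) (hnull : resDeq d none ∈ L) :
    VWit L := by
  obtain ⟨n, hn⟩ := List.mem_iff_getElem?.1 hnull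
  obtain ⟨k, hkn, hk⟩ := hwf.exists_invDeq_before hn
  obtain ⟨hkl, hLk⟩ := List.getElem?_eq_some_iff.1 hk
  have hci : c <+: L.take k :=
    List.prefix_take_iff.2 ⟨hpre, hpre.length_le_of_getElem?_eq_of_not_mem hk hd⟩
  have hmem : resDeq d none ∈ L.drop (k + 1) := by
    refine List.mem_of_getElem? (i := n - (k + 1)) ?_
    rwa [List.getElem?_drop, Nat.add_sub_cancel' hkn]
  obtain ⟨cd, c3, hsplit⟩ := List.append_of_mem hmem
  refine ⟨d, L.take k, cd, c3, ?_, fun _ _ _ =>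
    ⟨u, x, ?_, ?_, fun d' hd' => absurd hd' (hlost d')⟩⟩
  · conv_lhs => rw [← List.take_append_drop k L, List.drop_eq_getElem_cons hkl, hLk, hsplit]
    simp
  · simp [hci.subset hx]
  · simp [hci.subset hx']

theorem no_lost_elements_general (c : ℕ → History)
    (hwf : ∀ i, WellFormed (c i)) (hcomp : ∀ i, CompleteH (c i))
    (hnv : ∀ i, ¬ VFresh (c i) ∧ ¬ VRepet (c i) ∧ ¬ VOrd (c i) ∧ ¬ VWit (c i))
    (hpre : ∀ i, c i <+: c (i + 1))
    (hd : ∀ i, numDeq (c i) < numDeq (c (i + 1)))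
    (u x : ℕ) (he : HAction.invEnq u x ∈ c 0) :
    ∃ j d, HAction.resDeq d (some x) ∈ c j := by
  by_contra! hlost
  set j := (c 0).length + 1
  obtain ⟨hfresh, hrep, hord, hwit⟩ := hnv j
  have hprefix : c 0 <+: c j := List.isPrefix_of_forall_isPrefix_succ hpre j
  have hres : resEnq u ∈ c 0 := resEnq_mem_of_invEnq_mem (hwf 0) (hcomp 0) he
  have hvalues : ∀ d z, resDeq d (some z) ∈ c j → z ∈ enqValues (c 0) := fun d z hz =>
    mem_enqValues.2 (exists_invEnq_mem_of_resDeq_mem hprefix hfresh hord he hres (hlost j) hz)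
  have hcount : numDeq (c 0) + (enqValues (c 0)).card < numDeq (c j) := by
    have hgrow : j + numDeq (c 0) ≤ numDeq (c j) :=
      (strictMono_nat_of_lt_succ hd).add_le_nat j 0
    have := card_enqValues_le (c 0)
    omega
  obtain ⟨d, hd0, hnull⟩ :=
    exists_null_resDeq_of_lt_numDeq (hwf j) (hcomp j) hrep hvalues hcount
  exact hwit (vWit_of_null_resDeq (hwf j) hprefix he hres (hlost j) hd0 hnull)

/-- In a growing chain of violation-free complete histories with an increasing
number of dequeue events, every enqueued value is eventually dequeued. -/
theorem no_lost_elements (c : ℕ → History)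
    (hwf : ∀ i, WellFormed (c i)) (hcomp : ∀ i, CompleteH (c i))
    (hu : ∀ i, UniqueEnqVals (c i))
    (hnv : ∀ i, ¬ VFresh (c i) ∧ ¬ VRepet (c i) ∧ ¬ VOrd (c i) ∧ ¬ VWit (c i))
    (hpre : ∀ i, c i <+: c (i + 1))
    (hd : ∀ i, numDeq (c i) < numDeq (c (i + 1)))
    (u x : ℕ) (he : HAction.invEnq u x ∈ c 0) :
    ∃ j d, HAction.resDeq d (some x) ∈ c j :=
  no_lost_elements_general c hwf hcomp hnv hpre hd u x he
end
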